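/- arXiv:2402.07099 — 3 statements merged into one kernel-verified Lean document; each statement's English description precedes it below -/
import Mathlib

section
/- Let G and Ḡ be MILP instances of size (m,n). Then G ∼₂ Ḡ if and only if there exists a permutation σ_W of {1,…,n} such that G ∼₂^W σ_W∗Ḡ, where σ_W∗Ḡ denotes the instance obtained from Ḡ by relabeling its variables by σ_W. -/
open scoped BigOperators Classical
open MeasureTheory

noncomputable section

/-- Type of constraint senses: `0` is `≤`, `1` is `=`, `2` is `≥`. -/
abbrev Sense : Type := Fin 3

/-- Extended lower bounds: `Sum.inl a` is a real bound, `Sum.inr ()` is `-∞`. -/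
abbrev ExtLo : Type := ℝ ⊕ Unit

/-- Extended upper bounds: `Sum.inl a` is a real bound, `Sum.inr ()` is `+∞`. -/
abbrev ExtHi : Type := ℝ ⊕ Unit

def senseRel (s : Sense) (a b : ℝ) : Prop :=
  if s = 0 then a ≤ b else if s = 1 then a = b else b ≤ a

def loSat (lo : ExtLo) (x : ℝ) : Prop :=
  match lo with
  | Sum.inl a => a ≤ x
  | Sum.inr _ => True

def hiSat (hi : ExtHi) (x : ℝ) : Prop :=
  match hi with
  | Sum.inl a => x ≤ a
  | Sum.inr _ => True

/-- The space `𝒢_{m,n}` of MILP instances of size `(m,n)`: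
`(A, b, c, ∘, l, u, I)`, with `I` encoded as a Boolean indicator vector. -/
abbrev MILP (m n : ℕ) : Type :=
  (Fin m → Fin n → ℝ) × (Fin m → ℝ) × (Fin n → ℝ) × (Fin m → Sense) ×
  (Fin n → ExtLo) × (Fin n → ExtHi) × (Fin n → Bool)

namespace MILP

variable {m n : ℕ}

def A (G : MILP m n) : Fin m → Fin n → ℝ := G.1
def b (G : MILP m n) : Fin m → ℝ := G.2.1
def c (G : MILP m n) : Fin n → ℝ := G.2.2.1
def sense (G : MILP m n) : Fin m → Sense := G.2.2.2.1
def lo (G : MILP m n) : Fin n → ExtLo := G.2.2.2.2.1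
def hi (G : MILP m n) : Fin n → ExtHi := G.2.2.2.2.2.1
def isInt (G : MILP m n) : Fin n → Bool := G.2.2.2.2.2.2

end MILP

/-- Satisfaction of the linear constraints `(Ax) ∘ b`. -/
def consSat {m n : ℕ} (G : MILP m n) (x : Fin n → ℝ) : Prop :=
  ∀ i, senseRel (MILP.sense G i) (∑ j, MILP.A G i j * x j) (MILP.b G i)

/-- Feasible set of the LP relaxation of `G`. -/
def lpFeasSet {m n : ℕ} (G : MILP m n) : Set (Fin n → ℝ) :=
  {x | consSat G x ∧ ∀ j, loSat (MILP.lo G j) (x j) ∧ hiSat (MILP.hi G j) (x j)}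

/-- Feasible set of `LP(G, j, lo', hi')`: the LP relaxation of `G` with the bound
constraint on variable `j` replaced by `lo' ≤ x_j ≤ hi'`. -/
def feasSetMod {m n : ℕ} (G : MILP m n) (j : Fin n) (lo' : ExtLo) (hi' : ExtHi) :
    Set (Fin n → ℝ) :=
  {x | consSat G x ∧ (∀ j', j' ≠ j → loSat (MILP.lo G j') (x j') ∧ hiSat (MILP.hi G j') (x j'))
      ∧ loSat lo' (x j) ∧ hiSat hi' (x j)}

/-- Optimal value (in `ℝ ∪ {±∞}`) of the LP `min cᵀx` over `S`:
`+∞` if infeasible, `-∞` if unbounded below. -/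
def lpVal {n : ℕ} (c : Fin n → ℝ) (S : Set (Fin n → ℝ)) : EReal :=
  ⨅ x ∈ S, ((∑ j, c j * x j : ℝ) : EReal)

/-- `f*(G)`: optimal value of the LP relaxation of `G`. -/
def fstar {m n : ℕ} (G : MILP m n) : EReal := lpVal (MILP.c G) (lpFeasSet G)

/-- `f*(G, j, lo', hi')`: optimal value of `LP(G, j, lo', hi')`. -/
def lpValMod {m n : ℕ} (G : MILP m n) (j : Fin n) (lo' : ExtLo) (hi' : ExtHi) : EReal :=
  lpVal (MILP.c G) (feasSetMod G j lo' hi')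

/-- The Euclidean norm on `ℝⁿ` (as `Fin n → ℝ`). -/
def euclNorm {n : ℕ} (x : Fin n → ℝ) : ℝ := Real.sqrt (∑ j, x j ^ 2)

/-- The Euclidean distance on `ℝⁿ`. -/
def euclDist {n : ℕ} (x y : Fin n → ℝ) : ℝ := euclNorm (fun j => x j - y j)

/-- `x` is an optimal solution of the LP relaxation of `G`. -/
def IsOptSol {m n : ℕ} (G : MILP m n) (x : Fin n → ℝ) : Prop :=
  x ∈ lpFeasSet G ∧ ((∑ j, MILP.c G j * x j : ℝ) : EReal) = fstar G

/-- `x` is an optimal solution of smallest Euclidean norm of the LP relaxation of `G`. -/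
def IsMinNormOpt {m n : ℕ} (G : MILP m n) (x : Fin n → ℝ) : Prop :=
  IsOptSol G x ∧ ∀ y, IsOptSol G y → euclNorm x ≤ euclNorm y

/-- `x*(G)`: the optimal solution of smallest Euclidean norm of the LP relaxation
(defaults to `0` when it does not exist). -/
def xstar {m n : ℕ} (G : MILP m n) : Fin n → ℝ :=
  if h : ∃ x, IsMinNormOpt G x then h.choose else 0

/-- `f*(G, j, l_j, ⌊x*(G)_j⌋)`. -/
def branchDown {m n : ℕ} (G : MILP m n) (j : Fin n) : EReal :=
  lpValMod G j (MILP.lo G j) (Sum.inl ((⌊xstar G j⌋ : ℤ) : ℝ))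

/-- `f*(G, j, ⌈x*(G)_j⌉, u_j)`. -/
def branchUp {m n : ℕ} (G : MILP m n) (j : Fin n) : EReal :=
  lpValMod G j (Sum.inl ((⌈xstar G j⌉ : ℤ) : ℝ)) (MILP.hi G j)

/-- The strong branching score vector `SB(G) ∈ ℝⁿ`. -/
def SB {m n : ℕ} (G : MILP m n) : Fin n → ℝ := fun j =>
  if MILP.isInt G j then
    ((branchDown G j).toReal - (fstar G).toReal) * ((branchUp G j).toReal - (fstar G).toReal)
  else 0

/-- `SB(G) ∈ ℝⁿ`: the LP relaxation of `G` is feasible and bounded (so that the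
min-norm optimal solution `x*(G)` exists and `f*(G)` is finite), and all the
branch LP values entering the strong branching scores are finite. -/
def SBRealValued {m n : ℕ} (G : MILP m n) : Prop :=
  (∃ x, IsMinNormOpt G x) ∧ fstar G ≠ ⊤ ∧ fstar G ≠ ⊥ ∧
  ∀ j, MILP.isInt G j →
    branchDown G j ≠ ⊤ ∧ branchDown G j ≠ ⊥ ∧ branchUp G j ≠ ⊤ ∧ branchUp G j ≠ ⊥

/-! ### WL colors -/

abbrev VFeat : Type := ℝ × Sense
abbrev WFeat : Type := ℝ × ExtLo × ExtHi × Bool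

/-- The pair (type of constraint-node colors, type of variable-node colors) at
each round of the WL test. -/
def WLTypes : ℕ → Type × Type
  | 0 => (VFeat, WFeat)
  | l + 1 =>
      ((WLTypes l).1 × Multiset ((WLTypes l).2 × ℝ),
       (WLTypes l).2 × Multiset ((WLTypes l).1 × ℝ))

abbrev VColor (l : ℕ) : Type := (WLTypes l).1
abbrev WColor (l : ℕ) : Type := (WLTypes l).2

/-- The canonical WL colors of a MILP instance: `(wl G l).1 i = C_l^V(i)` and
`(wl G l).2 j = C_l^W(j)`. -/
def wl {m n : ℕ} (G : MILP m n) : (l : ℕ) → (Fin m → VColor l) × (Fin n → WColor l)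
  | 0 =>
      (fun i => (MILP.b G i, MILP.sense G i),
       fun j => (MILP.c G j, MILP.lo G j, MILP.hi G j, MILP.isInt G j))
  | l + 1 =>
      (fun i => ((wl G l).1 i,
        (Finset.univ.filter (fun j => MILP.A G i j ≠ 0)).val.map
          (fun j => ((wl G l).2 j, MILP.A G i j))),
       fun j => ((wl G l).2 j,
        (Finset.univ.filter (fun i => MILP.A G i j ≠ 0)).val.map
          (fun i => ((wl G l).1 i, MILP.A G i j))))

/-- `G` is message-passing-tractable: whenever two constraints and two variables are
respectively indistinguishable by all rounds of the WL test, the corresponding matrix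
entries agree (i.e. every submatrix of `A` over a pair of classes of the stable WL
partition is constant). -/
def MPTractable {m n : ℕ} (G : MILP m n) : Prop :=
  ∀ i i' j j', (∀ l, (wl G l).1 i = (wl G l).1 i') → (∀ l, (wl G l).2 j = (wl G l).2 j') →
    MILP.A G i j = MILP.A G i' j'

/-- `G ∼^W G2`. -/
def WLEquivW {m n : ℕ} (G G2 : MILP m n) : Prop :=
  ∀ l, Finset.univ.val.map ((wl G l).1) = Finset.univ.val.map ((wl G2 l).1)
    ∧ ∀ j, (wl G l).2 j = (wl G2 l).2 j

/-! ### MP-GNNs -/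

/-- A message-passing GNN of size `(m,n)`. -/
structure MPGNN (m n : ℕ) where
  L : ℕ
  d : ℕ → ℕ
  e : ℕ → ℕ
  p0 : ℝ × Sense → (Fin (d 0) → ℝ)
  q0 : ℝ × ExtLo × ExtHi × Bool → (Fin (d 0) → ℝ)
  f : (l : ℕ) → (Fin (d l) → ℝ) × ℝ → (Fin (e l) → ℝ)
  g : (l : ℕ) → (Fin (d l) → ℝ) × ℝ → (Fin (e l) → ℝ)
  p : (l : ℕ) → (Fin (d l) → ℝ) × (Fin (e l) → ℝ) → (Fin (d (l + 1)) → ℝ)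
  q : (l : ℕ) → (Fin (d l) → ℝ) × (Fin (e l) → ℝ) → (Fin (d (l + 1)) → ℝ)
  r : (Fin (d L) → ℝ) × (Fin (d L) → ℝ) × (Fin (d L) → ℝ) → ℝ
  p0_cont : Continuous p0
  q0_cont : Continuous q0
  f_cont : ∀ l, Continuous (f l)
  g_cont : ∀ l, Continuous (g l)
  p_cont : ∀ l, Continuous (p l)
  q_cont : ∀ l, Continuous (q l)
  r_cont : Continuous r
  f_zero : ∀ l t, f l (t, 0) = 0
  g_zero : ∀ l s, g l (s, 0) = 0

namespace MPGNN

variable {m n : ℕ}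

/-- The features of an MP-GNN on input `G` after `l` layers:
`(st N G l).1 i = s_i^l` and `(st N G l).2 j = t_j^l`. -/
def st (N : MPGNN m n) (G : MILP m n) :
    (l : ℕ) → (Fin m → (Fin (N.d l) → ℝ)) × (Fin n → (Fin (N.d l) → ℝ))
  | 0 =>
      (fun i => N.p0 (MILP.b G i, MILP.sense G i),
       fun j => N.q0 (MILP.c G j, MILP.lo G j, MILP.hi G j, MILP.isInt G j))
  | l + 1 =>
      (fun i => N.p l ((st N G l).1 i, ∑ j, N.f l ((st N G l).2 j, MILP.A G i j)),
       fun j => N.q l ((st N G l).2 j, ∑ i, N.g l ((st N G l).1 i, MILP.A G i j)))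

/-- The output `F(G) ∈ ℝⁿ` of an MP-GNN. -/
def eval (N : MPGNN m n) (G : MILP m n) : Fin n → ℝ := fun j =>
  N.r (∑ i, (st N G N.L).1 i, ∑ j', (st N G N.L).2 j', (st N G N.L).2 j)

end MPGNN

/-! ### 2-FWL colors -/

/-- The pair (type of `(V,W)`-pair colors, type of `(W,W)`-pair colors) at each
round of the 2-FWL test. -/
def FWLTypes : ℕ → Type × Type
  | 0 => (VFeat × WFeat × ℝ, WFeat × WFeat × Bool)
  | l + 1 =>
      ((FWLTypes l).1 × Multiset ((FWLTypes l).2 × (FWLTypes l).1),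
       (FWLTypes l).2 × Multiset ((FWLTypes l).1 × (FWLTypes l).1))

abbrev VWColor (l : ℕ) : Type := (FWLTypes l).1
abbrev WWColor (l : ℕ) : Type := (FWLTypes l).2

/-- The canonical 2-FWL colors of a MILP instance: `(fwl G l).1 i j = C_l^{VW}(i,j)` and
`(fwl G l).2 j₁ j₂ = C_l^{WW}(j₁,j₂)`. -/
def fwl {m n : ℕ} (G : MILP m n) :
    (l : ℕ) → (Fin m → Fin n → VWColor l) × (Fin n → Fin n → WWColor l)
  | 0 =>
      (fun i j => ((MILP.b G i, MILP.sense G i),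
        (MILP.c G j, MILP.lo G j, MILP.hi G j, MILP.isInt G j), MILP.A G i j),
       fun j1 j2 => ((MILP.c G j1, MILP.lo G j1, MILP.hi G j1, MILP.isInt G j1),
        (MILP.c G j2, MILP.lo G j2, MILP.hi G j2, MILP.isInt G j2), decide (j1 = j2)))
  | l + 1 =>
      (fun i j => ((fwl G l).1 i j,
        Finset.univ.val.map (fun j1 => ((fwl G l).2 j1 j, (fwl G l).1 i j1))),
       fun j1 j2 => ((fwl G l).2 j1 j2,
        Finset.univ.val.map (fun i => ((fwl G l).1 i j2, (fwl G l).1 i j1))))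

/-- `G ∼₂ G2`. -/
def FWLEquiv {m n : ℕ} (G G2 : MILP m n) : Prop :=
  ∀ l, (Finset.univ : Finset (Fin m × Fin n)).val.map (fun p => (fwl G l).1 p.1 p.2)
        = (Finset.univ : Finset (Fin m × Fin n)).val.map (fun p => (fwl G2 l).1 p.1 p.2)
    ∧ (Finset.univ : Finset (Fin n × Fin n)).val.map (fun p => (fwl G l).2 p.1 p.2)
        = (Finset.univ : Finset (Fin n × Fin n)).val.map (fun p => (fwl G2 l).2 p.1 p.2)

/-- `G ∼₂^W G2`. -/
def FWLEquivW {m n : ℕ} (G G2 : MILP m n) : Prop :=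
  ∀ l, ∀ j, Finset.univ.val.map (fun i => (fwl G l).1 i j)
        = Finset.univ.val.map (fun i => (fwl G2 l).1 i j)
    ∧ Finset.univ.val.map (fun j1 => (fwl G l).2 j1 j)
        = Finset.univ.val.map (fun j1 => (fwl G2 l).2 j1 j)

/-! ### 2-FGNNs -/

/-- A second-order folklore GNN of size `(m,n)`. -/
structure FGNN2 (m n : ℕ) where
  L : ℕ
  d : ℕ → ℕ
  e : ℕ → ℕ
  p0 : VFeat × WFeat × ℝ → (Fin (d 0) → ℝ)
  q0 : WFeat × WFeat × Bool → (Fin (d 0) → ℝ)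
  f : (l : ℕ) → (Fin (d l) → ℝ) × (Fin (d l) → ℝ) → (Fin (e l) → ℝ)
  g : (l : ℕ) → (Fin (d l) → ℝ) × (Fin (d l) → ℝ) → (Fin (e l) → ℝ)
  p : (l : ℕ) → (Fin (d l) → ℝ) × (Fin (e l) → ℝ) → (Fin (d (l + 1)) → ℝ)
  q : (l : ℕ) → (Fin (d l) → ℝ) × (Fin (e l) → ℝ) → (Fin (d (l + 1)) → ℝ)
  r : (Fin (d L) → ℝ) × (Fin (d L) → ℝ) → ℝ
  p0_cont : Continuous p0
  q0_cont : Continuous q0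
  f_cont : ∀ l, Continuous (f l)
  g_cont : ∀ l, Continuous (g l)
  p_cont : ∀ l, Continuous (p l)
  q_cont : ∀ l, Continuous (q l)
  r_cont : Continuous r

namespace FGNN2

variable {m n : ℕ}

/-- The features of a 2-FGNN on input `G` after `l` layers:
`(st N G l).1 i j = s_{ij}^l` and `(st N G l).2 j₁ j₂ = t_{j₁j₂}^l`. -/
def st (N : FGNN2 m n) (G : MILP m n) :
    (l : ℕ) → (Fin m → Fin n → (Fin (N.d l) → ℝ)) × (Fin n → Fin n → (Fin (N.d l) → ℝ))
  | 0 =>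
      (fun i j => N.p0 ((MILP.b G i, MILP.sense G i),
        (MILP.c G j, MILP.lo G j, MILP.hi G j, MILP.isInt G j), MILP.A G i j),
       fun j1 j2 => N.q0 ((MILP.c G j1, MILP.lo G j1, MILP.hi G j1, MILP.isInt G j1),
        (MILP.c G j2, MILP.lo G j2, MILP.hi G j2, MILP.isInt G j2), decide (j1 = j2)))
  | l + 1 =>
      (fun i j => N.p l ((st N G l).1 i j, ∑ j1, N.f l ((st N G l).2 j1 j, (st N G l).1 i j1)),
       fun j1 j2 => N.q l ((st N G l).2 j1 j2, ∑ i, N.g l ((st N G l).1 i j2, (st N G l).1 i j1)))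

/-- The output `F(G) ∈ ℝⁿ` of a 2-FGNN. -/
def eval (N : FGNN2 m n) (G : MILP m n) : Fin n → ℝ := fun j =>
  N.r (∑ i, (st N G N.L).1 i j, ∑ j1, (st N G N.L).2 j1 j)

end FGNN2


/-- Relabeling of the variables of a MILP instance by a permutation `σ`:
`A′_{ij} = A_{i σ⁻¹(j)}`, `c′_j = c_{σ⁻¹(j)}`, `l′_j = l_{σ⁻¹(j)}`, `u′_j = u_{σ⁻¹(j)}`,
`I′ = σ(I)`, with `b` and `∘` unchanged. -/
def permW {m n : ℕ} (σ : Equiv.Perm (Fin n)) (G : MILP m n) : MILP m n :=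
  (fun i j => MILP.A G i (σ.symm j), MILP.b G, fun j => MILP.c G (σ.symm j),
   MILP.sense G, fun j => MILP.lo G (σ.symm j), fun j => MILP.hi G (σ.symm j),
   fun j => MILP.isInt G (σ.symm j))

/-! Both relations only compare multisets of colours, and relabelling the variables merely
permutes colours; so `⇐` follows by summing the column multisets of `G ∼₂^W σ ∗ Ḡ` over the
columns.

For `⇒`, the flag `δ` that every `WW` colour carries singles out the diagonal colours
`C_l^{WW}(j,j)`, so `G ∼₂ Ḡ` matches them as multisets at each round. Colours only refine, hence
the sets of matched pairs `(j, j')` decrease and stabilise, and one permutation `σ` matches the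
diagonal colours at all rounds. The diagonal colour at round `l + 1` records the `VW` column
multiset at round `l`, and any `VW` colour at round `l + 1` in column `j` records the `WW` column
multiset at round `l`; without constraints an instance is determined by its round-`0` diagonal
colours. -/

section Multiset

variable {α β γ : Type*} [Fintype α] [Fintype β]

theorem univ_val_map_comp_equiv (e : α ≃ β) (f : β → γ) :
    (Finset.univ : Finset α).val.map (fun a => f (e a)) = Finset.univ.val.map f := by
  conv_rhs => rw [← Multiset.map_univ_val_equiv e, Multiset.map_map]
  rfl

theorem univ_val_map_eq_sum (f : α → γ) :
    (Finset.univ : Finset α).val.map f = ∑ a, {f a} := by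
  rw [Finset.sum_eq_multiset_sum]
  exact (Multiset.sum_map_singleton _).symm.trans (by rw [Multiset.map_map]; rfl)

theorem univ_val_map_prod_eq_of_forall {f g : α → β → γ}
    (h : ∀ b, Finset.univ.val.map (f · b) = Finset.univ.val.map (g · b)) :
    (Finset.univ : Finset (α × β)).val.map (fun p => f p.1 p.2)
      = (Finset.univ : Finset (α × β)).val.map (fun p => g p.1 p.2) := by
  simp only [univ_val_map_eq_sum, Fintype.sum_prod_type_right] at h ⊢
  exact Finset.sum_congr rfl fun b _ => h b

theorem exists_equiv_of_univ_val_map_eq {f : α → γ} {g : β → γ}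
    (h : Finset.univ.val.map f = Finset.univ.val.map g) :
    ∃ e : α ≃ β, ∀ a, g (e a) = f a := by
  classical
  have hfiber : ∀ c, Fintype.card {a // f a = c} = Fintype.card {b // g b = c} := by
    intro c
    simpa [Multiset.count_map, Fintype.card_subtype, Finset.card_def, eq_comm] using
      congrArg (Multiset.count c) h
  exact ⟨Equiv.ofFiberEquiv fun c => Fintype.equivOfCardEq (hfiber c),
    Equiv.ofFiberEquiv_map _⟩

theorem filter_univ_val_map_eq_diag [DecidableEq α] (C : α × α → γ) (p : γ → Prop)
    [DecidablePred p] (hp : ∀ q, p (C q) ↔ q.1 = q.2) :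
    (Finset.univ.val.map C).filter p = Finset.univ.val.map fun a => C (a, a) := by
  have hdiag : Finset.univ.filter (p ∘ C) = Finset.univ.diag := by
    ext q
    simp [hp]
  rw [Multiset.filter_map, ← Finset.filter_val, hdiag, Finset.diag, Finset.map_val,
    Multiset.map_map]
  rfl

end Multiset

section FWL

variable {m n : ℕ}

def WWColor.diagFlag : (l : ℕ) → WWColor l → Bool
  | 0, c => c.2.2
  | l + 1, c => diagFlag l c.1

theorem diagFlag_fwl (G : MILP m n) (l : ℕ) (j₁ j₂ : Fin n) :
    WWColor.diagFlag l ((fwl G l).2 j₁ j₂) = decide (j₁ = j₂) := by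
  induction l with
  | zero => rfl
  | succ l ih => exact ih

theorem fwl_permW (σ : Equiv.Perm (Fin n)) (H : MILP m n) (l : ℕ) :
    (∀ i j, (fwl (permW σ H) l).1 i j = (fwl H l).1 i (σ.symm j)) ∧
      ∀ j₁ j₂, (fwl (permW σ H) l).2 j₁ j₂ = (fwl H l).2 (σ.symm j₁) (σ.symm j₂) := by
  induction l with
  | zero =>
    refine ⟨fun i j => rfl, fun j₁ j₂ => ?_⟩
    simp only [fwl, EmbeddingLike.apply_eq_iff_eq]
    rfl
  | succ l ih =>
    refine ⟨fun i j => ?_, fun j₁ j₂ => ?_⟩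
    · simp only [fwl, ih.1, ih.2]
      rw [univ_val_map_comp_equiv σ.symm
        fun j₁ => ((fwl H l).2 j₁ (σ.symm j), (fwl H l).1 i j₁)]
    · simp only [fwl, ih.1, ih.2]
      rfl

theorem FWLEquiv.trans {G G' G'' : MILP m n} (h : FWLEquiv G G') (h' : FWLEquiv G' G'') :
    FWLEquiv G G'' := fun l => ⟨(h l).1.trans (h' l).1, (h l).2.trans (h' l).2⟩

theorem fwlEquiv_permW_left (σ : Equiv.Perm (Fin n)) (H : MILP m n) :
    FWLEquiv (permW σ H) H := by
  intro l
  simp only [(fwl_permW σ H l).1, (fwl_permW σ H l).2]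
  exact ⟨univ_val_map_comp_equiv ((Equiv.refl _).prodCongr σ.symm)
      fun p => (fwl H l).1 p.1 p.2,
    univ_val_map_comp_equiv (σ.symm.prodCongr σ.symm) fun p => (fwl H l).2 p.1 p.2⟩

theorem FWLEquivW.fwlEquiv {G H : MILP m n} (h : FWLEquivW G H) : FWLEquiv G H := fun l =>
  ⟨univ_val_map_prod_eq_of_forall fun j => (h l j).1,
    univ_val_map_prod_eq_of_forall fun j => (h l j).2⟩

theorem univ_val_map_fwl_diag_eq {G H : MILP m n} (h : FWLEquiv G H) (l : ℕ) :
    Finset.univ.val.map (fun j => (fwl G l).2 j j)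
      = Finset.univ.val.map (fun j => (fwl H l).2 j j) := by
  have := congrArg (Multiset.filter fun c => WWColor.diagFlag l c) (h l).2
  rwa [filter_univ_val_map_eq_diag _ _ fun q => by simp [diagFlag_fwl],
    filter_univ_val_map_eq_diag _ _ fun q => by simp [diagFlag_fwl]] at this

theorem exists_perm_fwl_diag_eq {G H : MILP m n} (h : FWLEquiv G H) :
    ∃ σ : Equiv.Perm (Fin n), ∀ l j, (fwl G l).2 j j = (fwl H l).2 (σ j) (σ j) := by
  let S : ℕ → Set (Fin n × Fin n) := fun l => {p | (fwl G l).2 p.1 p.1 = (fwl H l).2 p.2 p.2}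
  have hS : Antitone S := antitone_nat_of_succ_le fun l _ hp => congrArg Prod.fst hp
  obtain ⟨L, hL⟩ := WellFoundedLT.antitone_chain_condition hS
  obtain ⟨σ, hσ⟩ := exists_equiv_of_univ_val_map_eq (univ_val_map_fwl_diag_eq h L)
  refine ⟨σ, fun l j => ?_⟩
  have hjL : (j, σ j) ∈ S L := (hσ j).symm
  rcases le_total l L with hl | hl
  · exact hS hl hjL
  · exact (hL l hl ▸ hjL : (j, σ j) ∈ S l)

theorem univ_val_map_fwl_fst_eq_of_diag {G H : MILP m n} {l : ℕ} {j j' : Fin n}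
    (h : (fwl G (l + 1)).2 j j = (fwl H (l + 1)).2 j' j') :
    Finset.univ.val.map (fun i => (fwl G l).1 i j)
      = Finset.univ.val.map (fun i => (fwl H l).1 i j') := by
  simpa only [fwl, Multiset.map_map, Function.comp_def] using
    congrArg (Multiset.map Prod.fst ∘ Prod.snd) h

theorem univ_val_map_fwl_snd_eq_of_fst {G H : MILP m n} {l : ℕ} {i i' : Fin m} {j j' : Fin n}
    (h : (fwl G (l + 1)).1 i j = (fwl H (l + 1)).1 i' j') :
    Finset.univ.val.map (fun j₁ => (fwl G l).2 j₁ j)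
      = Finset.univ.val.map (fun j₁ => (fwl H l).2 j₁ j') := by
  simpa only [fwl, Multiset.map_map, Function.comp_def] using
    congrArg (Multiset.map Prod.fst ∘ Prod.snd) h

theorem eq_of_fwl_zero_diag_eq [IsEmpty (Fin m)] {G H : MILP m n}
    (h : ∀ j, (fwl G 0).2 j j = (fwl H 0).2 j j) : G = H := by
  obtain ⟨A, b, c, s, lo, hi, I⟩ := G
  obtain ⟨A', b', c', s', lo', hi', I'⟩ := H
  have hw : ∀ j, (c j, lo j, hi j, I j) = (c' j, lo' j, hi' j, I' j) :=
    fun j => congrArg Prod.fst (h j)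
  simp only [Prod.mk.injEq] at hw ⊢
  exact ⟨Subsingleton.elim A A', Subsingleton.elim b b', funext fun j => (hw j).1,
    Subsingleton.elim s s', funext fun j => (hw j).2.1, funext fun j => (hw j).2.2.1,
    funext fun j => (hw j).2.2.2⟩

theorem fwlEquivW_of_fwl_diag_eq {G H : MILP m n}
    (h : ∀ l j, (fwl G l).2 j j = (fwl H l).2 j j) : FWLEquivW G H := by
  intro l j
  refine ⟨univ_val_map_fwl_fst_eq_of_diag (h (l + 1) j), ?_⟩
  rcases isEmpty_or_nonempty (Fin m) with hm | ⟨⟨i⟩⟩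
  · rw [eq_of_fwl_zero_diag_eq (h 0)]
  · have hi : (fwl G (l + 1)).1 i j ∈ Finset.univ.val.map (fun i => (fwl H (l + 1)).1 i j) :=
      univ_val_map_fwl_fst_eq_of_diag (h (l + 2) j) ▸
        Multiset.mem_map_of_mem _ (Finset.mem_univ_val i)
    obtain ⟨i', -, hi'⟩ := Multiset.mem_map.mp hi
    exact univ_val_map_fwl_snd_eq_of_fst hi'.symm

end FWL

/-- `G ∼₂ Ḡ` iff `G ∼₂^W σ_W ∗ Ḡ` for some permutation `σ_W` of the
variables. -/
theorem fwlEquiv_iff_exists_perm_fwlEquivW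
    {m n : ℕ} (G H : MILP m n) :
    FWLEquiv G H ↔ ∃ σ : Equiv.Perm (Fin n), FWLEquivW G (permW σ H) := by
  constructor
  · intro hE
    obtain ⟨σ, hσ⟩ := exists_perm_fwl_diag_eq hE
    refine ⟨σ.symm, fwlEquivW_of_fwl_diag_eq fun l j => ?_⟩
    rw [(fwl_permW σ.symm H l).2, Equiv.symm_symm, hσ]
  · rintro ⟨σ, hW⟩
    exact hW.fwlEquiv.trans (fwlEquiv_permW_left σ H)

end
end

section
/- Let G and Ḡ be MILP instances of size (m,n) with G ∼₂^W Ḡ. Then for every j ∈ {1,…,n}, every l̂ ∈ {−∞}∪ℝ, and every û ∈ ℝ∪{+∞}, the linear programs LP(G,j,l̂,û) and LP(Ḡ,j,l̂,û) have the same optimal value, where the optimal value of a minimization LP is the infimum of its objective over its feasible set, taken in ℝ∪{±∞} (equal to +∞ if infeasible and −∞ if unbounded below). -/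
open scoped BigOperators Classical
open MeasureTheory

noncomputable section

/-!
Fix a level `L` at which the joint 2-FWL colouring of the pairs of `G` and `H` no longer
refines; it exists because the colourings get finer and finer on a finite set. Given a feasible
point `x` of `LP(H, j, l̂, û)`, let `y j₁` be the mean of `x` over the columns `j₂` of `H` with
`C_L(j₂, j) = C_L(j₁, j)`. Stability makes the entries of `A` equidistributed over colour
classes, so each constraint of `G` on `y` is an average of constraints of `H` on `x`, and the
objective values agree. The bounds survive averaging by convexity, and the colour class of `j`
is `{j}` itself, so `y` is feasible for `LP(G, j, l̂, û)`. Exchanging `G` and `H` gives equality.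
-/

open Finset

section FiberAverage

variable {ι α : Type*} [Fintype ι]

def fiberAvg (f : ι → α) (x : ι → ℝ) (a : α) : ℝ :=
  𝔼 k ∈ univ.filter (fun k => f k = a), x k

theorem fiberAvg_mem {f : ι → α} {x : ι → ℝ} {a : α} {s : Set ℝ} (hs : Convex ℝ s)
    (ha : ∃ k, f k = a) (hx : ∀ k, f k = a → x k ∈ s) : fiberAvg f x a ∈ s := by
  obtain ⟨k, hk⟩ := ha
  set F := univ.filter (fun k => f k = a)
  have hF : (0 : ℝ) < #F := by exact_mod_cast card_pos.2 ⟨k, by simpa [F] using hk⟩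
  have hw : ∑ _k ∈ F, (#F : ℝ)⁻¹ = 1 := by rw [sum_const, nsmul_eq_mul, mul_inv_cancel₀ hF.ne']
  have := hs.sum_mem (fun _ _ => by positivity) hw fun k hk => hx k (mem_filter.1 hk).2
  rw [fiberAvg, expect_eq_sum_div_card, sum_div]
  simpa only [smul_eq_mul, div_eq_inv_mul] using this

theorem fiberAvg_of_fiber_eq_singleton {f : ι → α} {x : ι → ℝ} {k : ι} (h : ∀ k', f k' = f k → k' = k) :
    fiberAvg f x (f k) = x k := by
  have : univ.filter (fun k' => f k' = f k) = {k} := by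
    ext k'; simpa using ⟨h k', fun h' => h' ▸ rfl⟩
  rw [fiberAvg, this, expect_singleton]

theorem sum_mul_fiberAvg {f : ι → α} {g x : ι → ℝ} (hg : ∀ k k', f k = f k' → g k = g k') :
    ∑ k, g k * fiberAvg f x (f k) = ∑ k, g k * x k := by
  have hmaps : ∀ k ∈ (univ : Finset ι), f k ∈ univ.image f :=
    fun k _ => mem_image_of_mem f (mem_univ k)
  rw [← sum_fiberwise_of_maps_to hmaps, ← sum_fiberwise_of_maps_to hmaps]
  refine sum_congr rfl fun a ha => ?_
  obtain ⟨k₀, -, rfl⟩ := mem_image.1 ha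
  set F := univ.filter (fun k => f k = f k₀)
  have hgF : ∀ k ∈ F, g k = g k₀ := fun k hk => hg k k₀ (mem_filter.1 hk).2
  calc ∑ k ∈ F, g k * fiberAvg f x (f k)
      = ∑ _k ∈ F, g k₀ * fiberAvg f x (f k₀) :=
        sum_congr rfl fun k hk => by rw [hgF k hk, (mem_filter.1 hk).2]
    _ = g k₀ * ∑ k ∈ F, x k := by
        rw [sum_const, ← card_smul_expect, fiberAvg, mul_smul_comm]
    _ = ∑ k ∈ F, g k * x k := by
        rw [mul_sum]; exact sum_congr rfl fun k hk => by rw [hgF k hk]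

end FiberAverage

section MultisetMap

variable {ι κ α β γ : Type*} [Fintype ι] [Fintype κ]

theorem sum_comp_eq_of_map_univ_eq {M : Type*} [AddCommMonoid M] {f : ι → α} {g : κ → α}
    (h : univ.val.map f = univ.val.map g) (φ : α → M) : ∑ i, φ (f i) = ∑ k, φ (g k) := by
  simpa only [Multiset.map_map, Function.comp_def, sum_map_val] using
    congrArg (fun s => (s.map φ).sum) h

theorem exists_eq_of_map_univ_eq {f : ι → α} {g : κ → α} (h : univ.val.map f = univ.val.map g)
    (i : ι) : ∃ k, g k = f i := by
  have : f i ∈ univ.val.map g := h ▸ Multiset.mem_map_of_mem f (mem_univ_val i)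
  simpa using this

theorem map_univ_pair_comp_snd_eq {f f' : ι → α} {g g' : ι → β} (φ : β → γ)
    (h : univ.val.map (fun i => (f i, g i)) = univ.val.map (fun i => (f' i, g' i))) :
    univ.val.map (fun i => (f i, φ (g i))) = univ.val.map (fun i => (f' i, φ (g' i))) := by
  simpa only [Multiset.map_map, Function.comp_def, Prod.map, id_eq] using
    congrArg (Multiset.map (Prod.map id φ)) h

end MultisetMap

theorem exists_refinement_stable {X : Type*} [Finite X] {C : ℕ → Type*} (c : ∀ l, X → C l)
    (hc : ∀ l x y, c (l + 1) x = c (l + 1) y → c l x = c l y) :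
    ∃ L, ∀ x y, c L x = c L y → c (L + 1) x = c (L + 1) y := by
  let K : ℕ → Set (X × X) := fun l => {p | c l p.1 = c l p.2}
  have hK : Antitone K := antitone_nat_of_succ_le fun l p hp => hc l p.1 p.2 hp
  obtain ⟨L, hL⟩ := WellFoundedLT.antitone_chain_condition hK
  refine ⟨L, fun x y hxy => ?_⟩
  have hmem : (x, y) ∈ K L := hxy
  rwa [hL (L + 1) L.le_succ] at hmem

section FWLStabilization

variable {m n : ℕ}

def fwlColor {κ : Type*} (Gs : κ → MILP m n) (l : ℕ) :
    κ × ((Fin m × Fin n) ⊕ (Fin n × Fin n)) → VWColor l ⊕ WWColor l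
  | (k, .inl (i, j)) => .inl ((fwl (Gs k) l).1 i j)
  | (k, .inr (j₁, j₂)) => .inr ((fwl (Gs k) l).2 j₁ j₂)

theorem fwlColor_eq_of_succ {κ : Type*} (Gs : κ → MILP m n) (l : ℕ)
    (x y : κ × ((Fin m × Fin n) ⊕ (Fin n × Fin n)))
    (h : fwlColor Gs (l + 1) x = fwlColor Gs (l + 1) y) : fwlColor Gs l x = fwlColor Gs l y := by
  rcases x with ⟨k, ⟨i, j⟩ | ⟨j₁, j₂⟩⟩ <;> rcases y with ⟨k', ⟨i', j'⟩ | ⟨j₁', j₂'⟩⟩ <;>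
    simp only [fwlColor, reduceCtorEq, Sum.inl.injEq, Sum.inr.injEq] at h ⊢
  · exact congrArg Prod.fst h
  · exact congrArg Prod.fst h

def FWLStable (G H : MILP m n) (L : ℕ) : Prop :=
  (∀ i j i' j', (fwl G L).1 i j = (fwl H L).1 i' j' →
      (fwl G (L + 1)).1 i j = (fwl H (L + 1)).1 i' j') ∧
    ∀ j₁ j₂ j₁' j₂', (fwl G L).2 j₁ j₂ = (fwl H L).2 j₁' j₂' →
      (fwl G (L + 1)).2 j₁ j₂ = (fwl H (L + 1)).2 j₁' j₂'

theorem exists_fwlStable {κ : Type*} [Finite κ] (Gs : κ → MILP m n) :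
    ∃ L, ∀ k k', FWLStable (Gs k) (Gs k') L := by
  obtain ⟨L, hL⟩ := exists_refinement_stable (fwlColor Gs) (fwlColor_eq_of_succ Gs)
  refine ⟨L, fun k k' => ⟨fun i j i' j' h => ?_, fun j₁ j₂ j₁' j₂' h => ?_⟩⟩
  · simpa [fwlColor] using
      hL (k, .inl (i, j)) (k', .inl (i', j')) (by simpa [fwlColor] using h)
  · simpa [fwlColor] using
      hL (k, .inr (j₁, j₂)) (k', .inr (j₁', j₂')) (by simpa [fwlColor] using h)

end FWLStabilization

def VWColor.base : (l : ℕ) → VWColor l → VWColor 0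
  | 0, c => c
  | l + 1, c => VWColor.base l c.1

def WWColor.base : (l : ℕ) → WWColor l → WWColor 0
  | 0, c => c
  | l + 1, c => WWColor.base l c.1

theorem VWColor.base_fwl {m n : ℕ} (G : MILP m n) :
    ∀ l i j, VWColor.base l ((fwl G l).1 i j) = (fwl G 0).1 i j
  | 0, _, _ => rfl
  | l + 1, i, j => VWColor.base_fwl G l i j

theorem VWColor.base_fwl_entry {m n : ℕ} (G : MILP m n) (l : ℕ) (i : Fin m) (j : Fin n) :
    (VWColor.base l ((fwl G l).1 i j)).2.2 = MILP.A G i j := by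
  rw [VWColor.base_fwl]
  rfl

theorem WWColor.base_fwl {m n : ℕ} (G : MILP m n) :
    ∀ l j₁ j₂, WWColor.base l ((fwl G l).2 j₁ j₂) = (fwl G 0).2 j₁ j₂
  | 0, _, _ => rfl
  | l + 1, j₁, j₂ => WWColor.base_fwl G l j₁ j₂

theorem FWLEquivW.symm {m n : ℕ} {G H : MILP m n} (h : FWLEquivW G H) : FWLEquivW H G :=
  fun l j => ⟨(h l j).1.symm, (h l j).2.symm⟩

namespace FWLStable

variable {m n : ℕ} {G H : MILP m n} {L : ℕ}

theorem map_vw_eq (hL : FWLStable G H L) {i i' j j'}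
    (h : (fwl G L).1 i j = (fwl H L).1 i' j') :
    univ.val.map (fun j₁ => ((fwl G L).2 j₁ j, (fwl G L).1 i j₁))
      = univ.val.map (fun j₁ => ((fwl H L).2 j₁ j', (fwl H L).1 i' j₁)) :=
  congrArg Prod.snd (hL.1 i j i' j' h)

theorem map_ww_eq (hL : FWLStable G H L) {j₁ j₂ j₁' j₂'}
    (h : (fwl G L).2 j₁ j₂ = (fwl H L).2 j₁' j₂') :
    univ.val.map (fun i => ((fwl G L).1 i j₂, (fwl G L).1 i j₁))
      = univ.val.map (fun i => ((fwl H L).1 i j₂', (fwl H L).1 i j₁')) :=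
  congrArg Prod.snd (hL.2 j₁ j₂ j₁' j₂' h)

end FWLStable

theorem convex_senseRel (s : Sense) (b : ℝ) : Convex ℝ {t | senseRel s t b} := by
  unfold senseRel
  split_ifs
  exacts [convex_Iic b, convex_singleton b, convex_Ici b]

theorem convex_loSat (lo : ExtLo) : Convex ℝ {t | loSat lo t} := by
  cases lo
  exacts [convex_Ici _, convex_univ]

theorem convex_hiSat (hi : ExtHi) : Convex ℝ {t | hiSat hi t} := by
  cases hi
  exacts [convex_Iic _, convex_univ]

/-- Row colourings `ρG, ρH` and column colourings `σG, σH` of `G` and `H` along which a point of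
`LP(H, j, ·, ·)` can be averaged into a point of `LP(G, j, ·, ·)` of the same cost; the Boolean
in `col_feat` marks the column `j`. -/
structure IsLPColoring {α β : Type*} {m n : ℕ} (G H : MILP m n) (j : Fin n)
    (ρG ρH : Fin m → β) (σG σH : Fin n → α) : Prop where
  rows : univ.val.map ρG = univ.val.map ρH
  cols : univ.val.map σG = univ.val.map σH
  row_feat : ∃ ν : β → ℝ × Sense, ∀ i,
    ν (ρG i) = (MILP.b G i, MILP.sense G i) ∧ ν (ρH i) = (MILP.b H i, MILP.sense H i)
  col_feat : ∃ ω : α → (ℝ × ExtLo × ExtHi) × Bool, ∀ j₁,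
    ω (σG j₁) = ((MILP.c G j₁, MILP.lo G j₁, MILP.hi G j₁), decide (j₁ = j)) ∧
      ω (σH j₁) = ((MILP.c H j₁, MILP.lo H j₁, MILP.hi H j₁), decide (j₁ = j))
  row_nbhd : ∀ i i', ρG i = ρH i' →
    univ.val.map (fun j₁ => (σG j₁, MILP.A G i j₁))
      = univ.val.map (fun j₁ => (σH j₁, MILP.A H i' j₁))
  col_nbhd : ∀ j₁ j₂, σH j₁ = σH j₂ →
    univ.val.map (fun i => (ρH i, MILP.A H i j₁))
      = univ.val.map (fun i => (ρH i, MILP.A H i j₂))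

namespace IsLPColoring

variable {α β : Type*} {m n : ℕ} {G H : MILP m n} {j : Fin n}
  {ρG ρH : Fin m → β} {σG σH : Fin n → α}

theorem row_feat_eq (hC : IsLPColoring G H j ρG ρH σG σH) {i i'} (h : ρH i' = ρG i) :
    MILP.b H i' = MILP.b G i ∧ MILP.sense H i' = MILP.sense G i := by
  obtain ⟨ν, hν⟩ := hC.row_feat
  simpa [(hν i').2, (hν i).1] using congrArg ν h

theorem col_feat_eq (hC : IsLPColoring G H j ρG ρH σG σH) {j₁ j₂} (h : σH j₂ = σG j₁) :
    (MILP.c H j₂ = MILP.c G j₁ ∧ MILP.lo H j₂ = MILP.lo G j₁ ∧ MILP.hi H j₂ = MILP.hi G j₁) ∧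
      (j₂ = j ↔ j₁ = j) := by
  obtain ⟨ω, hω⟩ := hC.col_feat
  simpa [(hω j₂).2, (hω j₁).1] using congrArg ω h

theorem fiberAvg_branch_col (hC : IsLPColoring G H j ρG ρH σG σH) (x : Fin n → ℝ) :
    fiberAvg σH x (σG j) = x j := by
  have hflag : ∀ j₂, σH j₂ = σG j → j₂ = j := fun j₂ h => (hC.col_feat_eq h).2.2 rfl
  obtain ⟨j₀, hj₀⟩ := exists_eq_of_map_univ_eq hC.cols j
  obtain rfl := hflag j₀ hj₀
  rw [← hj₀]
  exact fiberAvg_of_fiber_eq_singleton fun j₂ h => hflag j₂ (h.trans hj₀)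

theorem loSat_hiSat_fiberAvg (hC : IsLPColoring G H j ρG ρH σG σH) {x : Fin n → ℝ}
    (hx : ∀ j₂, j₂ ≠ j → loSat (MILP.lo H j₂) (x j₂) ∧ hiSat (MILP.hi H j₂) (x j₂))
    {j₁ : Fin n} (hj₁ : j₁ ≠ j) :
    loSat (MILP.lo G j₁) (fiberAvg σH x (σG j₁)) ∧ hiSat (MILP.hi G j₁) (fiberAvg σH x (σG j₁)) :=
  fiberAvg_mem ((convex_loSat _).inter (convex_hiSat _)) (exists_eq_of_map_univ_eq hC.cols j₁)
    fun j₂ h => by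
      obtain ⟨⟨-, hlo, hhi⟩, hflag⟩ := hC.col_feat_eq h
      rw [← hlo, ← hhi]
      exact hx j₂ (hflag.not.2 hj₁)

theorem fiberAvg_col_eq (hC : IsLPColoring G H j ρG ρH σG σH) {j₁ j₂ : Fin n}
    (h : σH j₁ = σH j₂) (a : β) :
    fiberAvg ρH (fun i => MILP.A H i j₁) a = fiberAvg ρH (fun i => MILP.A H i j₂) a := by
  simp only [fiberAvg, expect_eq_sum_div_card, sum_filter]
  rw [sum_comp_eq_of_map_univ_eq (hC.col_nbhd j₁ j₂ h) fun p => if p.1 = a then p.2 else 0]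

theorem sum_A_mul_fiberAvg (hC : IsLPColoring G H j ρG ρH σG σH) (x : Fin n → ℝ) (i : Fin m) :
    ∑ j₁, MILP.A G i j₁ * fiberAvg σH x (σG j₁)
      = fiberAvg ρH (fun i' => ∑ j₁, MILP.A H i' j₁ * x j₁) (ρG i) := by
  set P := univ.filter (fun i' => ρH i' = ρG i)
  have hP : P.Nonempty :=
    (exists_eq_of_map_univ_eq hC.rows i).imp fun i' h => by simpa [P] using h
  have hrow : ∀ i' ∈ P, ∑ j₁, MILP.A G i j₁ * fiberAvg σH x (σG j₁)
      = ∑ j₁, MILP.A H i' j₁ * fiberAvg σH x (σH j₁) := fun i' hi' =>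
    sum_comp_eq_of_map_univ_eq (hC.row_nbhd i i' (mem_filter.1 hi').2.symm)
      fun p => p.2 * fiberAvg σH x p.1
  calc ∑ j₁, MILP.A G i j₁ * fiberAvg σH x (σG j₁)
      = 𝔼 i' ∈ P, ∑ j₁, MILP.A H i' j₁ * fiberAvg σH x (σH j₁) :=
        (expect_const hP _).symm.trans (expect_congr rfl hrow)
    _ = ∑ j₁, fiberAvg ρH (fun i' => MILP.A H i' j₁) (ρG i) * fiberAvg σH x (σH j₁) := by
        simp only [expect_sum_comm, fiberAvg, expect_mul, P]
    _ = ∑ j₁, fiberAvg ρH (fun i' => MILP.A H i' j₁) (ρG i) * x j₁ :=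
        sum_mul_fiberAvg fun _ _ h => hC.fiberAvg_col_eq h _
    _ = fiberAvg ρH (fun i' => ∑ j₁, MILP.A H i' j₁ * x j₁) (ρG i) := by
        simp only [expect_sum_comm, fiberAvg, expect_mul]

theorem consSat_fiberAvg (hC : IsLPColoring G H j ρG ρH σG σH) {x : Fin n → ℝ}
    (hx : consSat H x) : consSat G fun j₁ => fiberAvg σH x (σG j₁) := by
  intro i
  rw [hC.sum_A_mul_fiberAvg]
  exact fiberAvg_mem (convex_senseRel _ _) (exists_eq_of_map_univ_eq hC.rows i) fun i' h => by
    obtain ⟨hb, hs⟩ := hC.row_feat_eq h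
    rw [← hb, ← hs]
    exact hx i'

theorem sum_c_mul_fiberAvg (hC : IsLPColoring G H j ρG ρH σG σH) (x : Fin n → ℝ) :
    ∑ j₁, MILP.c G j₁ * fiberAvg σH x (σG j₁) = ∑ j₁, MILP.c H j₁ * x j₁ := by
  obtain ⟨ω, hω⟩ := hC.col_feat
  have hcG : ∀ j₁, MILP.c G j₁ = (ω (σG j₁)).1.1 := by simp [hω]
  have hcH : ∀ j₁, MILP.c H j₁ = (ω (σH j₁)).1.1 := by simp [hω]
  calc ∑ j₁, MILP.c G j₁ * fiberAvg σH x (σG j₁)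
      = ∑ j₂, (ω (σH j₂)).1.1 * fiberAvg σH x (σH j₂) := by
        simp only [hcG]
        exact sum_comp_eq_of_map_univ_eq hC.cols fun a => (ω a).1.1 * fiberAvg σH x a
    _ = ∑ j₂, (ω (σH j₂)).1.1 * x j₂ := sum_mul_fiberAvg fun _ _ h => by rw [h]
    _ = ∑ j₁, MILP.c H j₁ * x j₁ := by simp only [hcH]

theorem lpValMod_le (hC : IsLPColoring G H j ρG ρH σG σH) (lo' : ExtLo) (hi' : ExtHi) :
    lpValMod G j lo' hi' ≤ lpValMod H j lo' hi' := by
  refine le_iInf₂ fun x ⟨hcons, hbnd, hlo, hhi⟩ => ?_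
  have hy : (fun j₁ => fiberAvg σH x (σG j₁)) ∈ feasSetMod G j lo' hi' :=
    ⟨hC.consSat_fiberAvg hcons, fun _ hj₁ => hC.loSat_hiSat_fiberAvg hbnd hj₁,
      by simpa only [hC.fiberAvg_branch_col] using hlo, by simpa only [hC.fiberAvg_branch_col] using hhi⟩
  calc lpValMod G j lo' hi' ≤ ((∑ j₁, MILP.c G j₁ * fiberAvg σH x (σG j₁) : ℝ) : EReal) :=
        iInf₂_le _ hy
    _ = ((∑ j₁, MILP.c H j₁ * x j₁ : ℝ) : EReal) := by rw [hC.sum_c_mul_fiberAvg]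

end IsLPColoring

theorem isLPColoring_fwl {m n : ℕ} {G H : MILP m n} {L : ℕ} (hGH : FWLEquivW G H)
    (hL : FWLStable G H L) (hHH : FWLStable H H L) (j : Fin n) :
    IsLPColoring G H j (fun i => (fwl G L).1 i j) (fun i => (fwl H L).1 i j)
      (fun j₁ => (fwl G L).2 j₁ j) (fun j₁ => (fwl H L).2 j₁ j) where
  rows := (hGH L j).1
  cols := (hGH L j).2
  row_feat := ⟨fun s => (VWColor.base L s).1,
    fun i => by simp only [VWColor.base_fwl]; exact ⟨rfl, rfl⟩⟩
  col_feat := ⟨fun s => (((WWColor.base L s).1.1, (WWColor.base L s).1.2.1,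
      (WWColor.base L s).1.2.2.1), (WWColor.base L s).2.2),
    fun j₁ => by simp only [WWColor.base_fwl]; exact ⟨rfl, rfl⟩⟩
  row_nbhd i i' h := by
    simpa only [VWColor.base_fwl_entry] using
      map_univ_pair_comp_snd_eq (fun s => (VWColor.base L s).2.2) (hL.map_vw_eq h)
  col_nbhd j₁ j₂ h := by
    simpa only [VWColor.base_fwl_entry] using
      map_univ_pair_comp_snd_eq (fun s => (VWColor.base L s).2.2) (hHH.map_ww_eq h)

/-- If `G ∼₂^W Ḡ`, then for every variable `j` and modified bounds
`l̂, û`, the LPs `LP(G,j,l̂,û)` and `LP(Ḡ,j,l̂,û)` have the same optimal value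
(in `ℝ ∪ {±∞}`). -/
theorem lpValMod_eq_of_fwlEquivW
    {m n : ℕ} (G H : MILP m n) (h : FWLEquivW G H) :
    ∀ (j : Fin n) (lo' : ExtLo) (hi' : ExtHi),
      lpValMod G j lo' hi' = lpValMod H j lo' hi' := by
  intro j lo' hi'
  obtain ⟨L, hL⟩ := exists_fwlStable ![G, H]
  exact le_antisymm ((isLPColoring_fwl h (hL 0 1) (hL 1 1) j).lpValMod_le lo' hi')
    ((isLPColoring_fwl h.symm (hL 1 0) (hL 0 0) j).lpValMod_le lo' hi')
end
end

section
/- Let G and Ḡ be MILP instances of size (m,n) with SB(G) ∈ ℝ^n and SB(Ḡ) ∈ ℝ^n. If G ∼₂ Ḡ, then there exists a permutation σ_W of {1,…,n} such that SB(G)_j = SB(Ḡ)_{σ_W^{−1}(j)} for all j ∈ {1,…,n}. -/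
open scoped BigOperators Classical
open MeasureTheory

noncomputable section

namespace SBaux
open Finset

/-! ### Generic lemmas -/

lemma exists_perm_of_map_eq {α β : Type*} [Fintype α] [DecidableEq α] [DecidableEq β]
    (f g : α → β) (h : Finset.univ.val.map f = Finset.univ.val.map g) :
    ∃ σ : Equiv.Perm α, ∀ a, f a = g (σ a) := by
  classical
  have key : ∀ F : α → β, ∀ b : β, Fintype.card {a // F a = b}
      = Multiset.count b (Finset.univ.val.map F) := by
    intro F b
    rw [Multiset.count_map, Fintype.card_subtype, Finset.card_def, Finset.filter_val]
    congr 1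
    apply Multiset.filter_congr
    intro a _
    exact ⟨fun h => h.symm, fun h => h.symm⟩
  have hcard : ∀ b : β, Fintype.card {a // f a = b} = Fintype.card {a // g a = b} := by
    intro b; rw [key f b, key g b, h]
  have e : ∀ b : β, {a // f a = b} ≃ {a // g a = b} := fun b => Fintype.equivOfCardEq (hcard b)
  refine ⟨(Equiv.sigmaFiberEquiv f).symm.trans
    ((Equiv.sigmaCongrRight e).trans (Equiv.sigmaFiberEquiv g)), fun a => ?_⟩
  exact ((e (f a) ⟨a, rfl⟩).2).symm

lemma avg_const {ι : Type*} {t : Finset ι} (ht : t.Nonempty) {v : ι → ℝ} {c : ℝ}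
    (h : ∀ i ∈ t, v i = c) : (∑ i ∈ t, v i) / t.card = c := by
  have hc : (0:ℝ) < t.card := by exact_mod_cast ht.card_pos
  rw [Finset.sum_congr rfl h, Finset.sum_const, nsmul_eq_mul, mul_comm, mul_div_assoc,
    div_self (ne_of_gt hc), mul_one]

lemma senseRel_avg {s : Sense} {b : ℝ} {ι : Type*} {t : Finset ι} (ht : t.Nonempty)
    {v : ι → ℝ} (h : ∀ i ∈ t, senseRel s (v i) b) :
    senseRel s ((∑ i ∈ t, v i) / t.card) b := by
  have hc : (0:ℝ) < t.card := by exact_mod_cast ht.card_pos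
  have hsum_le : (∀ i ∈ t, v i ≤ b) → (∑ i ∈ t, v i) / t.card ≤ b := by
    intro hle
    rw [div_le_iff₀ hc]
    calc (∑ i ∈ t, v i) ≤ ∑ i ∈ t, b := Finset.sum_le_sum hle
    _ = t.card * b := by rw [Finset.sum_const, nsmul_eq_mul]
    _ = b * t.card := mul_comm _ _
  have hsum_ge : (∀ i ∈ t, b ≤ v i) → b ≤ (∑ i ∈ t, v i) / t.card := by
    intro hle
    rw [le_div_iff₀ hc]
    calc b * t.card = t.card * b := mul_comm _ _
    _ = ∑ i ∈ t, b := by rw [Finset.sum_const, nsmul_eq_mul]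
    _ ≤ _ := Finset.sum_le_sum hle
  unfold senseRel at h ⊢
  split_ifs at h ⊢ with h0 h1
  · exact hsum_le h
  · exact avg_const ht h
  · exact hsum_ge h

lemma senseRel_mid {s : Sense} {a a' b : ℝ} (h : senseRel s a b) (h' : senseRel s a' b) :
    senseRel s ((a + a') / 2) b := by
  unfold senseRel at h h' ⊢
  split_ifs at h h' ⊢ with h0 h1 <;> first
    | linarith
    | (rw [h, h']; norm_num)

lemma loSat_avg {lo : ExtLo} {ι : Type*} {t : Finset ι} (ht : t.Nonempty) {v : ι → ℝ}
    (h : ∀ i ∈ t, loSat lo (v i)) : loSat lo ((∑ i ∈ t, v i) / t.card) := by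
  have hc : (0:ℝ) < t.card := by exact_mod_cast ht.card_pos
  cases lo with
  | inl a =>
    simp only [loSat] at h ⊢
    rw [le_div_iff₀ hc]
    calc a * t.card = ∑ i ∈ t, a := by rw [Finset.sum_const, nsmul_eq_mul, mul_comm]
    _ ≤ _ := Finset.sum_le_sum h
  | inr u => trivial

lemma hiSat_avg {hi : ExtHi} {ι : Type*} {t : Finset ι} (ht : t.Nonempty) {v : ι → ℝ}
    (h : ∀ i ∈ t, hiSat hi (v i)) : hiSat hi ((∑ i ∈ t, v i) / t.card) := by
  have hc : (0:ℝ) < t.card := by exact_mod_cast ht.card_pos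
  cases hi with
  | inl a =>
    simp only [hiSat] at h ⊢
    rw [div_le_iff₀ hc]
    calc (∑ i ∈ t, v i) ≤ ∑ i ∈ t, a := Finset.sum_le_sum h
    _ = a * t.card := by rw [Finset.sum_const, nsmul_eq_mul, mul_comm]
  | inr u => trivial

lemma loSat_mid {lo : ExtLo} {a a' : ℝ} (h : loSat lo a) (h' : loSat lo a') :
    loSat lo ((a + a') / 2) := by
  cases lo with
  | inl c => simp only [loSat] at h h' ⊢; linarith
  | inr u => trivial

lemma hiSat_mid {hi : ExtHi} {a a' : ℝ} (h : hiSat hi a) (h' : hiSat hi a') :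
    hiSat hi ((a + a') / 2) := by
  cases hi with
  | inl c => simp only [hiSat] at h h' ⊢; linarith
  | inr u => trivial

/-! ### LP value basics -/

lemma lpVal_le_of_forall_exists {n : ℕ} {c c' : Fin n → ℝ} {S T : Set (Fin n → ℝ)}
    (h : ∀ x ∈ T, ∃ y ∈ S, (∑ j, c j * y j) = ∑ j, c' j * x j) :
    lpVal c S ≤ lpVal c' T := by
  refine le_iInf fun x => le_iInf fun hx => ?_
  obtain ⟨y, hy, hobj⟩ := h x hx
  have h1 : lpVal c S ≤ ((∑ j, c j * y j : ℝ) : EReal) :=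
    iInf_le_of_le y (iInf_le_of_le hy le_rfl)
  rw [hobj] at h1; exact h1

lemma mid_mem_lpFeasSet {m n : ℕ} {G : MILP m n} {x y : Fin n → ℝ}
    (hx : x ∈ lpFeasSet G) (hy : y ∈ lpFeasSet G) :
    (fun j => (x j + y j) / 2) ∈ lpFeasSet G := by
  constructor
  · intro i
    have hval : (∑ j, MILP.A G i j * ((x j + y j)/2))
        = ((∑ j, MILP.A G i j * x j) + ∑ j, MILP.A G i j * y j) / 2 := by
      rw [← Finset.sum_add_distrib, Finset.sum_div]
      exact Finset.sum_congr rfl fun j _ => by ring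
    rw [hval]
    exact senseRel_mid (hx.1 i) (hy.1 i)
  · intro j
    exact ⟨loSat_mid (hx.2 j).1 (hy.2 j).1, hiSat_mid (hx.2 j).2 (hy.2 j).2⟩

lemma euclNorm_le_iff {n : ℕ} {x y : Fin n → ℝ} :
    euclNorm x ≤ euclNorm y ↔ (∑ j, x j ^ 2) ≤ ∑ j, y j ^ 2 := by
  unfold euclNorm
  exact Real.sqrt_le_sqrt_iff (Finset.sum_nonneg fun j _ => sq_nonneg _)

lemma isOptSol_obj_eq {m n : ℕ} {G : MILP m n} {x y : Fin n → ℝ}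
    (hx : IsOptSol G x) (hy : IsOptSol G y) :
    (∑ j, MILP.c G j * x j) = ∑ j, MILP.c G j * y j := by
  have h := hx.2.trans hy.2.symm
  exact_mod_cast h

lemma minNormOpt_unique {m n : ℕ} {G : MILP m n} {x y : Fin n → ℝ}
    (hx : IsMinNormOpt G x) (hy : IsMinNormOpt G y) : x = y := by
  have hobj := isOptSol_obj_eq hx.1 hy.1
  have hzfeas := mid_mem_lpFeasSet hx.1.1 hy.1.1
  have hzobj : (∑ j, MILP.c G j * ((x j + y j)/2)) = ∑ j, MILP.c G j * x j := by
    have : (∑ j, MILP.c G j * ((x j + y j)/2))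
        = ((∑ j, MILP.c G j * x j) + ∑ j, MILP.c G j * y j)/2 := by
      rw [← Finset.sum_add_distrib, Finset.sum_div]
      exact Finset.sum_congr rfl fun j _ => by ring
    rw [this, ← hobj]; ring
  have hzopt : IsOptSol G (fun j => (x j + y j)/2) := ⟨hzfeas, by
    rw [show (∑ j, MILP.c G j * ((x j + y j)/2) : ℝ) = ∑ j, MILP.c G j * x j from hzobj]
    exact hx.1.2⟩
  have h1 : (∑ j, x j ^ 2) ≤ ∑ j, ((x j + y j)/2) ^ 2 := euclNorm_le_iff.1 (hx.2 _ hzopt)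
  have h2 : (∑ j, y j ^ 2) = ∑ j, x j ^ 2 :=
    le_antisymm (euclNorm_le_iff.1 (hy.2 x hx.1)) (euclNorm_le_iff.1 (hx.2 y hy.1))
  have hzsum : (∑ j, ((x j + y j)/2) ^ 2)
      = ((∑ j, x j ^ 2) + ∑ j, y j ^ 2)/2 - (∑ j, (x j - y j)^2)/4 := by
    rw [← Finset.sum_add_distrib, Finset.sum_div, Finset.sum_div, ← Finset.sum_sub_distrib]
    exact Finset.sum_congr rfl fun j _ => by ring
  have hzero : (∑ j, (x j - y j)^2) ≤ 0 := by
    rw [hzsum, h2] at h1; linarith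
  have hnn : ∀ j ∈ (Finset.univ : Finset (Fin n)), (0:ℝ) ≤ (x j - y j)^2 := fun j _ => sq_nonneg _
  have hall := (Finset.sum_eq_zero_iff_of_nonneg hnn).1
    (le_antisymm hzero (Finset.sum_nonneg hnn))
  funext j
  have hj := hall j (Finset.mem_univ j)
  have := pow_eq_zero_iff (n := 2) (by norm_num) |>.1 hj
  linarith [sub_eq_zero.1 this]

lemma xstar_isMinNormOpt {m n : ℕ} {G : MILP m n} (h : ∃ x, IsMinNormOpt G x) :
    IsMinNormOpt G (xstar G) := by
  rw [xstar, dif_pos h]; exact h.choose_spec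

end SBaux
namespace SBaux
open Finset

section Transfer

variable {m n : ℕ} {κ μ : Type*} [DecidableEq κ] [DecidableEq μ]

/-- Transport of a point of the second instance to the first, by class averaging. -/
noncomputable def transp (rA rB : Fin n → μ) (x : Fin n → ℝ) : Fin n → ℝ := fun j =>
  (∑ j1 ∈ Finset.univ.filter (fun j1 => rB j1 = rA j), x j1)
    / (Finset.univ.filter (fun j1 => rB j1 = rA j)).card

lemma transp_apply_const {rA rB : Fin n → μ} {x : Fin n → ℝ}
    (hcc : ∀ j1 j2, rB j1 = rB j2 → x j1 = x j2) {j j1 : Fin n} (hj : rB j1 = rA j) :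
    transp rA rB x j = x j1 := by
  unfold transp
  refine avg_const ⟨j1, Finset.mem_filter.2 ⟨Finset.mem_univ _, hj⟩⟩ (fun j2 hj2 => hcc _ _ ?_)
  exact ((Finset.mem_filter.1 hj2).2).trans hj.symm

/-- The combinatorial hypotheses allowing to transfer LP solutions between two instances. -/
structure THyp (G H : MILP m n) (rV rV' : Fin m → κ) (rW rW' : Fin n → μ) : Prop where
  h1 : Finset.univ.val.map rV = Finset.univ.val.map rV'
  h2 : Finset.univ.val.map rW = Finset.univ.val.map rW'
  hb : ∀ i i', rV i = rV' i' → MILP.b G i = MILP.b H i' ∧ MILP.sense G i = MILP.sense H i'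
  hw : ∀ j j', rW j = rW' j' → MILP.c G j = MILP.c H j' ∧ MILP.lo G j = MILP.lo H j'
      ∧ MILP.hi G j = MILP.hi H j' ∧ MILP.isInt G j = MILP.isInt H j'
  hs : ∀ i i' t, rV i = rV' i' →
      ∑ j1 ∈ Finset.univ.filter (fun j1 => rW j1 = t), MILP.A G i j1
      = ∑ j1 ∈ Finset.univ.filter (fun j1 => rW' j1 = t), MILP.A H i' j1
  hu : ∀ j j' k, rW j = rW' j' →
      ∑ i ∈ Finset.univ.filter (fun i => rV i = k), MILP.A G i j
      = ∑ i ∈ Finset.univ.filter (fun i => rV' i = k), MILP.A H i j'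

variable {G H : MILP m n} {rV rV' : Fin m → κ} {rW rW' : Fin n → μ}

namespace THyp

lemma symm (hy : THyp G H rV rV' rW rW') : THyp H G rV' rV rW' rW where
  h1 := hy.h1.symm
  h2 := hy.h2.symm
  hb := fun i' i hii => ⟨(hy.hb i i' hii.symm).1.symm, (hy.hb i i' hii.symm).2.symm⟩
  hw := fun j' j hjj => ⟨(hy.hw j j' hjj.symm).1.symm, (hy.hw j j' hjj.symm).2.1.symm,
    (hy.hw j j' hjj.symm).2.2.1.symm, (hy.hw j j' hjj.symm).2.2.2.symm⟩
  hs := fun i' i t hii => (hy.hs i i' t hii.symm).symm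
  hu := fun j' j k hjj => (hy.hu j j' k hjj.symm).symm

lemma exists_rW' (hy : THyp G H rV rV' rW rW') (j : Fin n) : ∃ j', rW' j' = rW j := by
  have hmem : rW j ∈ Finset.univ.val.map rW' := by
    rw [← hy.h2]
    exact Multiset.mem_map_of_mem _ (Finset.mem_def.1 (Finset.mem_univ j))
  obtain ⟨j', -, hj'⟩ := Multiset.mem_map.1 hmem
  exact ⟨j', hj'⟩

lemma exists_rV' (hy : THyp G H rV rV' rW rW') (i : Fin m) : ∃ i', rV' i' = rV i := by
  have hmem : rV i ∈ Finset.univ.val.map rV' := by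
    rw [← hy.h1]
    exact Multiset.mem_map_of_mem _ (Finset.mem_def.1 (Finset.mem_univ i))
  obtain ⟨i', -, hi'⟩ := Multiset.mem_map.1 hmem
  exact ⟨i', hi'⟩

lemma card_fib (hy : THyp G H rV rV' rW rW') (t : μ) :
    (Finset.univ.filter (fun j1 => rW j1 = t)).card
    = (Finset.univ.filter (fun j1 => rW' j1 = t)).card := by
  have key : ∀ f : Fin n → μ, (Finset.univ.filter (fun j1 => f j1 = t)).card
      = Multiset.count t (Finset.univ.val.map f) := by
    intro f
    rw [Multiset.count_map, Finset.card_def, Finset.filter_val]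
    congr 1
    apply Multiset.filter_congr
    intro a _
    exact ⟨fun h => h.symm, fun h => h.symm⟩
  rw [key, key, hy.h2]

lemma card_fib_pos (hy : THyp G H rV rV' rW rW') (j : Fin n) :
    0 < (Finset.univ.filter (fun j1 => rW' j1 = rW j)).card := by
  rw [← hy.card_fib]
  exact Finset.card_pos.2 ⟨j, Finset.mem_filter.2 ⟨Finset.mem_univ j, rfl⟩⟩

lemma image_eq (hy : THyp G H rV rV' rW rW') :
    Finset.univ.image rW = Finset.univ.image rW' := by
  ext t
  simp only [Finset.mem_image]
  constructor
  · rintro ⟨j, -, rfl⟩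
    obtain ⟨j', hj'⟩ := hy.exists_rW' j
    exact ⟨j', Finset.mem_univ _, hj'⟩
  · rintro ⟨j', -, rfl⟩
    obtain ⟨j, hj⟩ := hy.symm.exists_rW' j'
    exact ⟨j, Finset.mem_univ _, hj⟩

lemma hwG (hy : THyp G H rV rV' rW rW') {j1 j2 : Fin n} (h12 : rW j1 = rW j2) :
    MILP.c G j1 = MILP.c G j2 ∧ MILP.lo G j1 = MILP.lo G j2
    ∧ MILP.hi G j1 = MILP.hi G j2 ∧ MILP.isInt G j1 = MILP.isInt G j2 := by
  obtain ⟨j', hj'⟩ := hy.exists_rW' j1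
  have e1 := hy.hw j1 j' hj'.symm
  have e2 := hy.hw j2 j' (hj'.trans h12).symm
  exact ⟨e1.1.trans e2.1.symm, e1.2.1.trans e2.2.1.symm, e1.2.2.1.trans e2.2.2.1.symm,
    e1.2.2.2.trans e2.2.2.2.symm⟩

lemma selfG (hy : THyp G H rV rV' rW rW') : THyp G G rV rV rW rW where
  h1 := rfl
  h2 := rfl
  hb := fun i1 i2 h12 => by
    obtain ⟨i', hi'⟩ := hy.exists_rV' i1
    have e1 := hy.hb i1 i' hi'.symm
    have e2 := hy.hb i2 i' (hi'.trans h12).symm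
    exact ⟨e1.1.trans e2.1.symm, e1.2.trans e2.2.symm⟩
  hw := fun j1 j2 h12 => hy.hwG h12
  hs := fun i1 i2 t h12 => by
    obtain ⟨i', hi'⟩ := hy.exists_rV' i1
    exact (hy.hs i1 i' t hi'.symm).trans (hy.hs i2 i' t (hi'.trans h12).symm).symm
  hu := fun j1 j2 k h12 => by
    obtain ⟨j', hj'⟩ := hy.exists_rW' j1
    exact (hy.hu j1 j' k hj'.symm).trans (hy.hu j2 j' k (hj'.trans h12).symm).symm

theorem feas_transp (hy : THyp G H rV rV' rW rW') {x : Fin n → ℝ} (hx : x ∈ lpFeasSet H) :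
    transp rW rW' x ∈ lpFeasSet G := by
  classical
  constructor
  · intro i
    set k := rV i with hk
    set D' := Finset.univ.filter (fun i' => rV' i' = k) with hD'
    have hD'ne : D'.Nonempty := by
      obtain ⟨i', hi'⟩ := hy.exists_rV' i
      exact ⟨i', Finset.mem_filter.2 ⟨Finset.mem_univ _, hi'⟩⟩
    have hmk : (0:ℝ) < D'.card := by exact_mod_cast hD'ne.card_pos
    set T := Finset.univ.image rW with hT
    have hmaps : ∀ j : Fin n, j ∈ Finset.univ → rW j ∈ T :=
      fun j _ => Finset.mem_image_of_mem rW (Finset.mem_univ j)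
    have hmaps' : ∀ j1 : Fin n, j1 ∈ Finset.univ → rW' j1 ∈ T := by
      intro j1 _
      rw [hT, hy.image_eq]
      exact Finset.mem_image_of_mem rW' (Finset.mem_univ j1)
    have lhs_group : (∑ j, MILP.A G i j * transp rW rW' x j)
        = ∑ t ∈ T, (∑ j ∈ Finset.univ.filter (fun j => rW j = t), MILP.A G i j)
            * ((∑ j1 ∈ Finset.univ.filter (fun j1 => rW' j1 = t), x j1)
              / (Finset.univ.filter (fun j1 => rW' j1 = t)).card) := by
      rw [← Finset.sum_fiberwise_of_maps_to hmaps (fun j => MILP.A G i j * transp rW rW' x j)]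
      refine Finset.sum_congr rfl fun t _ => ?_
      rw [Finset.sum_mul]
      refine Finset.sum_congr rfl fun j hj => ?_
      have hjt : rW j = t := (Finset.mem_filter.1 hj).2
      simp only [transp, hjt]
    have rhs_group : (∑ i' ∈ D', ∑ j1, MILP.A H i' j1 * x j1)
        = ∑ t ∈ T, ∑ i' ∈ D', ∑ j1 ∈ Finset.univ.filter (fun j1 => rW' j1 = t),
            MILP.A H i' j1 * x j1 := by
      rw [Finset.sum_congr rfl (fun i' (_ : i' ∈ D') =>
        (Finset.sum_fiberwise_of_maps_to hmaps' (fun j1 => MILP.A H i' j1 * x j1)).symm)]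
      exact Finset.sum_comm
    have per_t : ∀ t ∈ T,
        ((∑ j ∈ Finset.univ.filter (fun j => rW j = t), MILP.A G i j)
          * ((∑ j1 ∈ Finset.univ.filter (fun j1 => rW' j1 = t), x j1)
            / (Finset.univ.filter (fun j1 => rW' j1 = t)).card)) * D'.card
        = ∑ i' ∈ D', ∑ j1 ∈ Finset.univ.filter (fun j1 => rW' j1 = t),
            MILP.A H i' j1 * x j1 := by
      intro t ht
      obtain ⟨jt, -, hjt⟩ := Finset.mem_image.1 ht
      set C := Finset.univ.filter (fun j => rW j = t) with hC
      set C' := Finset.univ.filter (fun j1 => rW' j1 = t) with hC'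
      have hCne : C.Nonempty := ⟨jt, Finset.mem_filter.2 ⟨Finset.mem_univ _, hjt⟩⟩
      have hcards : C.card = C'.card := hy.card_fib t
      have hnt : (0:ℝ) < C'.card := by
        rw [← hcards]; exact_mod_cast hCne.card_pos
      set sG := ∑ j ∈ C, MILP.A G i j with hsG
      set gval := ∑ i2 ∈ Finset.univ.filter (fun i2 => rV i2 = k), MILP.A G i2 jt with hgval
      have hinner : ∀ i' ∈ D', (∑ j1 ∈ C', MILP.A H i' j1) = sG := by
        intro i' hi'
        have hii' : rV i = rV' i' := ((Finset.mem_filter.1 hi').2).symm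
        exact (hy.hs i i' t hii').symm
      have hcol : ∀ j1 ∈ C', (∑ i' ∈ D', MILP.A H i' j1) = gval := by
        intro j1 hj1
        have hjj1 : rW jt = rW' j1 := hjt.trans ((Finset.mem_filter.1 hj1).2).symm
        exact (hy.hu jt j1 k hjj1).symm
      have hdouble : (D'.card : ℝ) * sG = (C'.card : ℝ) * gval := by
        have e1 : (∑ i' ∈ D', ∑ j1 ∈ C', MILP.A H i' j1) = D'.card * sG := by
          rw [Finset.sum_congr rfl hinner, Finset.sum_const, nsmul_eq_mul]
        have e2 : (∑ i' ∈ D', ∑ j1 ∈ C', MILP.A H i' j1) = C'.card * gval := by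
          rw [Finset.sum_comm, Finset.sum_congr rfl hcol, Finset.sum_const, nsmul_eq_mul]
        rw [← e1, e2]
      have hrhs : (∑ i' ∈ D', ∑ j1 ∈ C', MILP.A H i' j1 * x j1)
          = gval * ∑ j1 ∈ C', x j1 := by
        rw [Finset.sum_comm, Finset.mul_sum]
        refine Finset.sum_congr rfl fun j1 hj1 => ?_
        rw [← Finset.sum_mul, hcol j1 hj1]
      rw [hrhs]
      have hnt' : ((C'.card : ℝ)) ≠ 0 := ne_of_gt hnt
      field_simp
      linear_combination (∑ j1 ∈ C', x j1) * hdouble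
    have key : (∑ j, MILP.A G i j * transp rW rW' x j)
        = (∑ i' ∈ D', ∑ j1, MILP.A H i' j1 * x j1) / D'.card := by
      rw [lhs_group, rhs_group, eq_div_iff (ne_of_gt hmk), Finset.sum_mul]
      exact Finset.sum_congr rfl per_t
    rw [key]
    refine senseRel_avg hD'ne (fun i' hi' => ?_)
    have hii' : rV i = rV' i' := ((Finset.mem_filter.1 hi').2).symm
    obtain ⟨hbeq, hseq⟩ := hy.hb i i' hii'
    rw [hbeq, hseq]
    exact hx.1 i'
  · intro j
    have hpos := hy.card_fib_pos j
    have hne : (Finset.univ.filter (fun j1 => rW' j1 = rW j)).Nonempty := Finset.card_pos.1 hpos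
    constructor
    · show loSat (MILP.lo G j) (transp rW rW' x j)
      unfold transp
      refine loSat_avg hne fun j1 hj1 => ?_
      have hjj1 : rW j = rW' j1 := ((Finset.mem_filter.1 hj1).2).symm
      rw [(hy.hw j j1 hjj1).2.1]
      exact (hx.2 j1).1
    · show hiSat (MILP.hi G j) (transp rW rW' x j)
      unfold transp
      refine hiSat_avg hne fun j1 hj1 => ?_
      have hjj1 : rW j = rW' j1 := ((Finset.mem_filter.1 hj1).2).symm
      rw [(hy.hw j j1 hjj1).2.2.1]
      exact (hx.2 j1).2

theorem obj_transp (hy : THyp G H rV rV' rW rW') (x : Fin n → ℝ) :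
    (∑ j, MILP.c G j * transp rW rW' x j) = ∑ j, MILP.c H j * x j := by
  classical
  set T := Finset.univ.image rW with hT
  have hmaps : ∀ j : Fin n, j ∈ Finset.univ → rW j ∈ T :=
    fun j _ => Finset.mem_image_of_mem rW (Finset.mem_univ j)
  have hmaps' : ∀ j1 : Fin n, j1 ∈ Finset.univ → rW' j1 ∈ T := by
    intro j1 _
    rw [hT, hy.image_eq]
    exact Finset.mem_image_of_mem rW' (Finset.mem_univ j1)
  rw [← Finset.sum_fiberwise_of_maps_to hmaps (fun j => MILP.c G j * transp rW rW' x j),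
     ← Finset.sum_fiberwise_of_maps_to hmaps' (fun j1 => MILP.c H j1 * x j1)]
  refine Finset.sum_congr rfl fun t ht => ?_
  obtain ⟨jt, -, hjt⟩ := Finset.mem_image.1 ht
  obtain ⟨jt', hjt'⟩ := hy.exists_rW' jt
  have hjt't : rW' jt' = t := hjt'.trans hjt
  set C := Finset.univ.filter (fun j => rW j = t) with hC
  set C' := Finset.univ.filter (fun j1 => rW' j1 = t) with hC'
  have hCne : C.Nonempty := ⟨jt, Finset.mem_filter.2 ⟨Finset.mem_univ _, hjt⟩⟩
  have hcards : C.card = C'.card := hy.card_fib t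
  have hnt : (0:ℝ) < C'.card := by
    rw [← hcards]; exact_mod_cast hCne.card_pos
  have hL : (∑ j ∈ C, MILP.c G j * transp rW rW' x j)
      = C.card * (MILP.c H jt' * ((∑ j1 ∈ C', x j1) / C'.card)) := by
    have step : ∀ j ∈ C, MILP.c G j * transp rW rW' x j
        = MILP.c H jt' * ((∑ j1 ∈ C', x j1) / C'.card) := by
      intro j hj
      have hjt2 : rW j = t := (Finset.mem_filter.1 hj).2
      have hcj : MILP.c G j = MILP.c H jt' := (hy.hw j jt' (hjt2.trans hjt't.symm)).1
      rw [hcj]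
      congr 1
      simp only [transp, hjt2, ← hC']
    rw [Finset.sum_congr rfl step, Finset.sum_const, nsmul_eq_mul]
  have hR : (∑ j1 ∈ C', MILP.c H j1 * x j1) = MILP.c H jt' * ∑ j1 ∈ C', x j1 := by
    rw [Finset.mul_sum]
    refine Finset.sum_congr rfl fun j1 hj1 => ?_
    have : MILP.c H j1 = MILP.c H jt' :=
      (hy.symm.hwG (((Finset.mem_filter.1 hj1).2).trans hjt't.symm)).1
    rw [this]
  rw [hL, hR, hcards]
  have hnt' : ((C'.card:ℝ)) ≠ 0 := ne_of_gt hnt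
  field_simp

theorem norm_transp_le (hy : THyp G H rV rV' rW rW') (x : Fin n → ℝ) :
    (∑ j, (transp rW rW' x j)^2) ≤ ∑ j1, (x j1)^2 := by
  classical
  set T := Finset.univ.image rW with hT
  have hmaps : ∀ j : Fin n, j ∈ Finset.univ → rW j ∈ T :=
    fun j _ => Finset.mem_image_of_mem rW (Finset.mem_univ j)
  have hmaps' : ∀ j1 : Fin n, j1 ∈ Finset.univ → rW' j1 ∈ T := by
    intro j1 _
    rw [hT, hy.image_eq]
    exact Finset.mem_image_of_mem rW' (Finset.mem_univ j1)
  rw [← Finset.sum_fiberwise_of_maps_to hmaps (fun j => (transp rW rW' x j)^2),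
     ← Finset.sum_fiberwise_of_maps_to hmaps' (fun j1 => (x j1)^2)]
  refine Finset.sum_le_sum fun t ht => ?_
  obtain ⟨jt, -, hjt⟩ := Finset.mem_image.1 ht
  set C := Finset.univ.filter (fun j => rW j = t) with hC
  set C' := Finset.univ.filter (fun j1 => rW' j1 = t) with hC'
  have hCne : C.Nonempty := ⟨jt, Finset.mem_filter.2 ⟨Finset.mem_univ _, hjt⟩⟩
  have hcards : C.card = C'.card := hy.card_fib t
  have hnt : (0:ℝ) < C'.card := by
    rw [← hcards]; exact_mod_cast hCne.card_pos
  have hL : (∑ j ∈ C, (transp rW rW' x j)^2)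
      = C.card * (((∑ j1 ∈ C', x j1) / C'.card))^2 := by
    have step : ∀ j ∈ C, (transp rW rW' x j)^2 = (((∑ j1 ∈ C', x j1) / C'.card))^2 := by
      intro j hj
      have hjt2 : rW j = t := (Finset.mem_filter.1 hj).2
      congr 1
      simp only [transp, hjt2, ← hC']
    rw [Finset.sum_congr rfl step, Finset.sum_const, nsmul_eq_mul]
  have hnt' : ((C'.card:ℝ)) ≠ 0 := ne_of_gt hnt
  have heq : (C'.card:ℝ) * ((∑ j1 ∈ C', x j1) / C'.card)^2
      = (∑ j1 ∈ C', x j1)^2 / C'.card := by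
    field_simp
  rw [hL, hcards, heq, div_le_iff₀ hnt]
  calc (∑ j1 ∈ C', x j1)^2 ≤ C'.card * ∑ j1 ∈ C', x j1 ^ 2 :=
    sq_sum_le_card_mul_sum_sq
  _ = (∑ j1 ∈ C', x j1 ^ 2) * C'.card := mul_comm _ _

theorem norm_transp_eq (hy : THyp G H rV rV' rW rW') {x : Fin n → ℝ}
    (hcc : ∀ j1 j2, rW' j1 = rW' j2 → x j1 = x j2) :
    (∑ j, (transp rW rW' x j)^2) = ∑ j1, (x j1)^2 := by
  classical
  set T := Finset.univ.image rW with hT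
  have hmaps : ∀ j : Fin n, j ∈ Finset.univ → rW j ∈ T :=
    fun j _ => Finset.mem_image_of_mem rW (Finset.mem_univ j)
  have hmaps' : ∀ j1 : Fin n, j1 ∈ Finset.univ → rW' j1 ∈ T := by
    intro j1 _
    rw [hT, hy.image_eq]
    exact Finset.mem_image_of_mem rW' (Finset.mem_univ j1)
  rw [← Finset.sum_fiberwise_of_maps_to hmaps (fun j => (transp rW rW' x j)^2),
     ← Finset.sum_fiberwise_of_maps_to hmaps' (fun j1 => (x j1)^2)]
  refine Finset.sum_congr rfl fun t ht => ?_
  obtain ⟨jt, -, hjt⟩ := Finset.mem_image.1 ht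
  obtain ⟨jt', hjt'⟩ := hy.exists_rW' jt
  have hjt't : rW' jt' = t := hjt'.trans hjt
  set C := Finset.univ.filter (fun j => rW j = t) with hC
  set C' := Finset.univ.filter (fun j1 => rW' j1 = t) with hC'
  have hCne : C.Nonempty := ⟨jt, Finset.mem_filter.2 ⟨Finset.mem_univ _, hjt⟩⟩
  have hcards : C.card = C'.card := hy.card_fib t
  have hL : (∑ j ∈ C, (transp rW rW' x j)^2) = C.card * (x jt')^2 := by
    have step : ∀ j ∈ C, (transp rW rW' x j)^2 = (x jt')^2 := by
      intro j hj
      have hjt2 : rW j = t := (Finset.mem_filter.1 hj).2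
      rw [transp_apply_const hcc (hjt't.trans hjt2.symm)]
    rw [Finset.sum_congr rfl step, Finset.sum_const, nsmul_eq_mul]
  have hR : (∑ j1 ∈ C', (x j1)^2) = C'.card * (x jt')^2 := by
    have step : ∀ j1 ∈ C', (x j1)^2 = (x jt')^2 := by
      intro j1 hj1
      rw [hcc j1 jt' (((Finset.mem_filter.1 hj1).2).trans hjt't.symm)]
    rw [Finset.sum_congr rfl step, Finset.sum_const, nsmul_eq_mul]
  rw [hL, hR, hcards]

theorem lpVal_eq (hy : THyp G H rV rV' rW rW') :
    lpVal (MILP.c G) (lpFeasSet G) = lpVal (MILP.c H) (lpFeasSet H) := by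
  refine le_antisymm ?_ ?_
  · exact lpVal_le_of_forall_exists fun x hx =>
      ⟨transp rW rW' x, hy.feas_transp hx, hy.obj_transp x⟩
  · exact lpVal_le_of_forall_exists fun x hx =>
      ⟨transp rW' rW x, hy.symm.feas_transp hx, hy.symm.obj_transp x⟩

theorem fstar_eq (hy : THyp G H rV rV' rW rW') : fstar G = fstar H := hy.lpVal_eq

theorem xstar_transfer (hy : THyp G H rV rV' rW rW') (hG : ∃ x, IsMinNormOpt G x)
    (hH : ∃ x, IsMinNormOpt H x) {j : Fin n} {j' : Fin n} (hjj : rW j = rW' j') :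
    xstar G j = xstar H j' := by
  have hxG := xstar_isMinNormOpt hG
  have hxH := xstar_isMinNormOpt hH
  have hfeq : fstar G = fstar H := hy.fstar_eq
  have hyGG : THyp G G rV rV rW rW := hy.selfG
  -- class constancy of xstar G
  have hccG : ∀ j1 j2, rW j1 = rW j2 → xstar G j1 = xstar G j2 := by
    have hfeas := hyGG.feas_transp hxG.1.1
    have hobj := hyGG.obj_transp (xstar G)
    have hopt : IsOptSol G (transp rW rW (xstar G)) := ⟨hfeas, by
      rw [show (∑ j, MILP.c G j * transp rW rW (xstar G) j : ℝ)
        = ∑ j, MILP.c G j * xstar G j from hobj]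
      exact hxG.1.2⟩
    have hnorm : euclNorm (transp rW rW (xstar G)) ≤ euclNorm (xstar G) :=
      euclNorm_le_iff.2 (hyGG.norm_transp_le _)
    have hmin : IsMinNormOpt G (transp rW rW (xstar G)) :=
      ⟨hopt, fun y hy' => le_trans hnorm (hxG.2 y hy')⟩
    have heq := minNormOpt_unique hmin hxG
    intro j1 j2 h12
    calc xstar G j1 = transp rW rW (xstar G) j1 := by rw [heq]
    _ = transp rW rW (xstar G) j2 := by unfold transp; rw [h12]
    _ = xstar G j2 := by rw [heq]
  -- x' := transport of xstar G is the min-norm optimal solution of H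
  have hyS := hy.symm
  have hfeas' : transp rW' rW (xstar G) ∈ lpFeasSet H := hyS.feas_transp hxG.1.1
  have hobj' : (∑ j, MILP.c H j * transp rW' rW (xstar G) j) = ∑ j, MILP.c G j * xstar G j :=
    hyS.obj_transp (xstar G)
  have hopt' : IsOptSol H (transp rW' rW (xstar G)) := ⟨hfeas', by
    rw [show (∑ j, MILP.c H j * transp rW' rW (xstar G) j : ℝ)
      = ∑ j, MILP.c G j * xstar G j from hobj']
    rw [hxG.1.2]; exact hfeq⟩
  have hnormeq : (∑ j, (transp rW' rW (xstar G) j)^2) = ∑ j, (xstar G j)^2 :=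
    hyS.norm_transp_eq hccG
  have hminx' : IsMinNormOpt H (transp rW' rW (xstar G)) := by
    refine ⟨hopt', fun y hy' => ?_⟩
    have hty : IsOptSol G (transp rW rW' y) := ⟨hy.feas_transp hy'.1, by
      rw [show (∑ j, MILP.c G j * transp rW rW' y j : ℝ) = ∑ j, MILP.c H j * y j
        from hy.obj_transp y]
      rw [hy'.2]; exact hfeq.symm⟩
    have h1 : euclNorm (xstar G) ≤ euclNorm (transp rW rW' y) := hxG.2 _ hty
    have h2 : euclNorm (transp rW rW' y) ≤ euclNorm y := euclNorm_le_iff.2 (hy.norm_transp_le y)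
    have h0 : euclNorm (transp rW' rW (xstar G)) ≤ euclNorm (xstar G) :=
      euclNorm_le_iff.2 (le_of_eq hnormeq)
    exact le_trans (le_trans h0 h1) h2
  have hfin : transp rW' rW (xstar G) = xstar H := minNormOpt_unique hminx' hxH
  rw [← hfin]
  exact (transp_apply_const hccG hjj).symm

end THyp
end Transfer
end SBaux
namespace SBaux
open Finset

/-! ### Factorization and stabilization tools -/

lemma exists_factor {α β γ : Type*} [Nonempty γ] (f : α → β) (g : α → γ)
    (h : ∀ x y, f x = f y → g x = g y) : ∃ φ : β → γ, ∀ x, g x = φ (f x) := by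
  classical
  refine ⟨fun b => if hb : ∃ x, f x = b then g hb.choose else Classical.arbitrary γ, fun x => ?_⟩
  have hx : ∃ y, f y = f x := ⟨x, rfl⟩
  show g x = dite (∃ y, f y = f x) (fun hb => g hb.choose) (fun _ => Classical.arbitrary γ)
  rw [dif_pos hx]
  exact (h hx.choose x hx.choose_spec).symm

lemma card_image_le_of_refines {α β γ : Type*} [Fintype α] [DecidableEq β] [DecidableEq γ]
    (f : α → β) (g : α → γ) (h : ∀ x y, f x = f y → g x = g y) :
    (Finset.univ.image g).card ≤ (Finset.univ.image f).card := by
  classical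
  cases isEmpty_or_nonempty α with
  | inl hα => simp [Finset.univ_eq_empty]
  | inr hα =>
    have hne : Nonempty γ := ⟨g (Classical.arbitrary α)⟩
    obtain ⟨φ, hφ⟩ := exists_factor f g h
    have himg : Finset.univ.image g = (Finset.univ.image f).image φ := by
      rw [Finset.image_image]
      exact Finset.image_congr fun x _ => hφ x
    rw [himg]
    exact Finset.card_image_le

lemma kernel_eq_of_card_eq {α β γ : Type*} [Fintype α] [DecidableEq β] [DecidableEq γ]
    (f : α → β) (g : α → γ) (h : ∀ x y, g x = g y → f x = f y)
    (hcard : (Finset.univ.image f).card = (Finset.univ.image g).card) :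
    ∀ x y, f x = f y → g x = g y := by
  classical
  cases isEmpty_or_nonempty α with
  | inl hα => intro x; exact (hα.false x).elim
  | inr hα =>
    have hne : Nonempty β := ⟨f (Classical.arbitrary α)⟩
    obtain ⟨φ, hφ⟩ := exists_factor g f h
    have himg : Finset.univ.image f = (Finset.univ.image g).image φ := by
      rw [Finset.image_image]
      exact Finset.image_congr fun x _ => hφ x
    have hinj : Set.InjOn φ (Finset.univ.image g) := by
      apply Finset.injOn_of_card_image_eq
      rw [← himg, hcard]
    intro x y hxy
    have hx : g x ∈ Finset.univ.image g := Finset.mem_image_of_mem g (Finset.mem_univ x)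
    have hy : g y ∈ Finset.univ.image g := Finset.mem_image_of_mem g (Finset.mem_univ y)
    refine hinj hx hy ?_
    rw [← hφ, ← hφ]; exact hxy

lemma exists_eq_succ_of_bounded {f : ℕ → ℕ} (hmono : ∀ l, f l ≤ f (l+1)) (B : ℕ)
    (hbound : ∀ l, f l ≤ B) : ∃ L, f L = f (L+1) := by
  by_contra hcon
  push_neg at hcon
  have hstrict : ∀ l, f l < f (l+1) := fun l => lt_of_le_of_ne (hmono l) (hcon l)
  have hgrow : ∀ l, l ≤ f l := by
    intro l
    induction l with
    | zero => exact Nat.zero_le _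
    | succ l ih => have := hstrict l; omega
  have h1 := hgrow (B+1)
  have h2 := hbound (B+1)
  omega

/-! ### Color machinery -/

lemma nonempty_colors : ∀ l, Nonempty (VWColor l) ∧ Nonempty (WWColor l) := by
  intro l
  induction l with
  | zero => exact ⟨⟨((0, 0), (0, Sum.inr (), Sum.inr (), false), 0)⟩,
      ⟨((0, Sum.inr (), Sum.inr (), false), (0, Sum.inr (), Sum.inr (), false), false)⟩⟩
  | succ l ih => exact ⟨⟨(ih.1.some, 0)⟩, ⟨(ih.2.some, 0)⟩⟩

instance nonempty_vwcolor (l : ℕ) : Nonempty (VWColor l) := (nonempty_colors l).1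
instance nonempty_wwcolor (l : ℕ) : Nonempty (WWColor l) := (nonempty_colors l).2

def vwProj0 : ∀ l, VWColor l → VWColor 0
  | 0 => id
  | l+1 => fun c => vwProj0 l c.1

def wwProj0 : ∀ l, WWColor l → WWColor 0
  | 0 => id
  | l+1 => fun c => wwProj0 l c.1

def wwPad : ∀ l, WWColor 0 → WWColor l
  | 0 => id
  | l+1 => fun c => (wwPad l c, 0)

section TwoInstances

variable {m n : ℕ}

/-- Variable-node features. -/
def wfeat (G : MILP m n) (j : Fin n) : WFeat :=
  (MILP.c G j, MILP.lo G j, MILP.hi G j, MILP.isInt G j)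

/-- Constraint-node features. -/
def vfeat (G : MILP m n) (i : Fin m) : VFeat := (MILP.b G i, MILP.sense G i)

/-- Tagged `(V,W)`-pair colors for the disjoint union of two instances. -/
def CV (G H : MILP m n) (l : ℕ) : Bool × Fin m × Fin n → VWColor l := fun x =>
  if x.1 then (fwl G l).1 x.2.1 x.2.2 else (fwl H l).1 x.2.1 x.2.2

/-- Tagged `(W,W)`-pair colors for the disjoint union of two instances. -/
def CW (G H : MILP m n) (l : ℕ) : Bool × Fin n × Fin n → WWColor l := fun x =>
  if x.1 then (fwl G l).2 x.2.1 x.2.2 else (fwl H l).2 x.2.1 x.2.2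

variable (G H : MILP m n)

lemma CV_succ (l : ℕ) (t : Bool) (i : Fin m) (j : Fin n) : CV G H (l+1) (t,i,j)
    = (CV G H l (t,i,j),
       Finset.univ.val.map fun j1 => (CW G H l (t,j1,j), CV G H l (t,i,j1))) := by
  cases t <;> rfl

lemma CW_succ (l : ℕ) (t : Bool) (j1 j2 : Fin n) : CW G H (l+1) (t,j1,j2)
    = (CW G H l (t,j1,j2),
       Finset.univ.val.map fun i => (CV G H l (t,i,j2), CV G H l (t,i,j1))) := by
  cases t <;> rfl

lemma CV_fst (l : ℕ) (x : Bool × Fin m × Fin n) : (CV G H (l+1) x).1 = CV G H l x := by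
  obtain ⟨t, i, j⟩ := x
  rw [CV_succ]

lemma CW_fst (l : ℕ) (x : Bool × Fin n × Fin n) : (CW G H (l+1) x).1 = CW G H l x := by
  obtain ⟨t, j1, j2⟩ := x
  rw [CW_succ]

lemma CV_zero (t : Bool) (i : Fin m) (j : Fin n) :
    CV G H 0 (t,i,j) = if t then (vfeat G i, wfeat G j, MILP.A G i j)
      else (vfeat H i, wfeat H j, MILP.A H i j) := by
  cases t <;> rfl

lemma CW_zero (t : Bool) (j1 j2 : Fin n) :
    CW G H 0 (t,j1,j2) = if t then (wfeat G j1, wfeat G j2, decide (j1 = j2))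
      else (wfeat H j1, wfeat H j2, decide (j1 = j2)) := by
  cases t <;> rfl

lemma vwProj0_CV : ∀ l x, vwProj0 l (CV G H l x) = CV G H 0 x := by
  intro l
  induction l with
  | zero => intro x; rfl
  | succ l ih =>
    intro x
    show vwProj0 l (CV G H (l+1) x).1 = CV G H 0 x
    rw [CV_fst]
    exact ih x

lemma wwProj0_CW : ∀ l x, wwProj0 l (CW G H l x) = CW G H 0 x := by
  intro l
  induction l with
  | zero => intro x; rfl
  | succ l ih =>
    intro x
    show wwProj0 l (CW G H (l+1) x).1 = CW G H 0 x
    rw [CW_fst]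
    exact ih x

lemma CW_pad (hm : m = 0) : ∀ l x, CW G H l x = wwPad l (CW G H 0 x) := by
  subst hm
  intro l
  induction l with
  | zero => intro x; rfl
  | succ l ih =>
    intro x
    obtain ⟨t, j1, j2⟩ := x
    rw [CW_succ, ih]
    show (wwPad l (CW G H 0 (t,j1,j2)),
        Multiset.map (fun i => (CV G H l (t,i,j2), CV G H l (t,i,j1))) Finset.univ.val)
      = (wwPad l (CW G H 0 (t,j1,j2)), (0 : Multiset (VWColor l × VWColor l)))
    refine congrArg₂ Prod.mk rfl ?_
    have h0 : (Finset.univ : Finset (Fin 0)).val = 0 := rfl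
    rw [h0, Multiset.map_zero]

/-- One-step stability of the joint color refinement at level `L`. -/
def StepStable (L : ℕ) : Prop :=
  (∀ x y, CV G H L x = CV G H L y → CV G H (L+1) x = CV G H (L+1) y) ∧
  (∀ x y, CW G H L x = CW G H L y → CW G H (L+1) x = CW G H (L+1) y)

lemma exists_stepStable : ∃ L, StepStable G H L := by
  classical
  set f : ℕ → ℕ := fun l => (Finset.univ.image (CV G H l)).card
    + (Finset.univ.image (CW G H l)).card with hf
  have hrefV : ∀ l x y, CV G H (l+1) x = CV G H (l+1) y → CV G H l x = CV G H l y := by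
    intro l x y hxy
    rw [← CV_fst G H l x, ← CV_fst G H l y, hxy]
  have hrefW : ∀ l x y, CW G H (l+1) x = CW G H (l+1) y → CW G H l x = CW G H l y := by
    intro l x y hxy
    rw [← CW_fst G H l x, ← CW_fst G H l y, hxy]
  have hmonoV : ∀ l, (Finset.univ.image (CV G H l)).card
      ≤ (Finset.univ.image (CV G H (l+1))).card :=
    fun l => card_image_le_of_refines _ _ (hrefV l)
  have hmonoW : ∀ l, (Finset.univ.image (CW G H l)).card
      ≤ (Finset.univ.image (CW G H (l+1))).card :=
    fun l => card_image_le_of_refines _ _ (hrefW l)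
  have hboundV : ∀ l, (Finset.univ.image (CV G H l)).card
      ≤ Fintype.card (Bool × Fin m × Fin n) :=
    fun l => le_trans Finset.card_image_le (le_of_eq (Finset.card_univ))
  have hboundW : ∀ l, (Finset.univ.image (CW G H l)).card
      ≤ Fintype.card (Bool × Fin n × Fin n) :=
    fun l => le_trans Finset.card_image_le (le_of_eq (Finset.card_univ))
  obtain ⟨L, hL⟩ := exists_eq_succ_of_bounded (f := f)
    (fun l => Nat.add_le_add (hmonoV l) (hmonoW l))
    (Fintype.card (Bool × Fin m × Fin n) + Fintype.card (Bool × Fin n × Fin n))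
    (fun l => Nat.add_le_add (hboundV l) (hboundW l))
  have hcardV : (Finset.univ.image (CV G H L)).card
      = (Finset.univ.image (CV G H (L+1))).card := by
    have h1 := hmonoV L
    have h2 := hmonoW L
    simp only [hf] at hL
    omega
  have hcardW : (Finset.univ.image (CW G H L)).card
      = (Finset.univ.image (CW G H (L+1))).card := by
    have h1 := hmonoV L
    have h2 := hmonoW L
    simp only [hf] at hL
    omega
  exact ⟨L, kernel_eq_of_card_eq _ _ (hrefV L) hcardV,
    kernel_eq_of_card_eq _ _ (hrefW L) hcardW⟩

lemma stepStable_succ {L : ℕ} (hL : StepStable G H L) : StepStable G H (L+1) := by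
  obtain ⟨φV, hφV⟩ := exists_factor (CV G H L) (CV G H (L+1)) hL.1
  obtain ⟨φW, hφW⟩ := exists_factor (CW G H L) (CW G H (L+1)) hL.2
  constructor
  · rintro ⟨t, i, j⟩ ⟨t', i', j'⟩ h1
    have h2 := congrArg Prod.snd h1
    rw [CV_succ G H L t i j, CV_succ G H L t' i' j'] at h2
    have h2' : (Finset.univ.val.map fun j1 => (CW G H L (t,j1,j), CV G H L (t,i,j1)))
        = (Finset.univ.val.map fun j1 => (CW G H L (t',j1,j'), CV G H L (t',i',j1))) := h2
    have e : ∀ (t : Bool) (i : Fin m) (j : Fin n),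
        (Finset.univ.val.map fun j1 => (CW G H (L+1) (t,j1,j), CV G H (L+1) (t,i,j1)))
        = Multiset.map (Prod.map φW φV)
          (Finset.univ.val.map fun j1 => (CW G H L (t,j1,j), CV G H L (t,i,j1))) := by
      intro t i j
      rw [Multiset.map_map]
      refine Multiset.map_congr rfl fun j1 _ => ?_
      exact congrArg₂ Prod.mk (hφW (t,j1,j)) (hφV (t,i,j1))
    rw [CV_succ G H (L+1) t i j, CV_succ G H (L+1) t' i' j']
    exact congrArg₂ Prod.mk h1
      ((e t i j).trans ((congrArg (Multiset.map (Prod.map φW φV)) h2').trans (e t' i' j').symm))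
  · rintro ⟨t, j1, j2⟩ ⟨t', j1', j2'⟩ h1
    have h2 := congrArg Prod.snd h1
    rw [CW_succ G H L t j1 j2, CW_succ G H L t' j1' j2'] at h2
    have h2' : (Finset.univ.val.map fun i => (CV G H L (t,i,j2), CV G H L (t,i,j1)))
        = (Finset.univ.val.map fun i => (CV G H L (t',i,j2'), CV G H L (t',i,j1'))) := h2
    have e : ∀ (t : Bool) (j1 j2 : Fin n),
        (Finset.univ.val.map fun i => (CV G H (L+1) (t,i,j2), CV G H (L+1) (t,i,j1)))
        = Multiset.map (Prod.map φV φV)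
          (Finset.univ.val.map fun i => (CV G H L (t,i,j2), CV G H L (t,i,j1))) := by
      intro t j1 j2
      rw [Multiset.map_map]
      refine Multiset.map_congr rfl fun i _ => ?_
      exact congrArg₂ Prod.mk (hφV (t,i,j2)) (hφV (t,i,j1))
    rw [CW_succ G H (L+1) t j1 j2, CW_succ G H (L+1) t' j1' j2']
    exact congrArg₂ Prod.mk h1
      ((e t j1 j2).trans ((congrArg (Multiset.map (Prod.map φV φV)) h2').trans (e t' j1' j2').symm))

lemma stepStable_ge {L : ℕ} (hL : StepStable G H L) : ∀ l, L ≤ l → StepStable G H l := by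
  intro l hl
  induction l, hl using Nat.le_induction with
  | base => exact hL
  | succ l hl ih => exact stepStable_succ G H ih

lemma CV_stable {L : ℕ} (hL : StepStable G H L) {x y : Bool × Fin m × Fin n}
    (hxy : CV G H L x = CV G H L y) : ∀ l, L ≤ l → CV G H l x = CV G H l y := by
  intro l hl
  induction l, hl using Nat.le_induction with
  | base => exact hxy
  | succ l hl ih => exact (stepStable_ge G H hL l hl).1 x y ih

lemma CW_stable {L : ℕ} (hL : StepStable G H L) {x y : Bool × Fin n × Fin n}
    (hxy : CW G H L x = CW G H L y) : ∀ l, L ≤ l → CW G H l x = CW G H l y := by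
  intro l hl
  induction l, hl using Nat.le_induction with
  | base => exact hxy
  | succ l hl ih => exact (stepStable_ge G H hL l hl).2 x y ih

end TwoInstances
end SBaux
namespace SBaux
open Finset

section Extract

variable {m n : ℕ}

def vwA (l : ℕ) (c : VWColor l) : ℝ := (vwProj0 l c).2.2

variable (G H : MILP m n)

lemma CV_zero_true (i : Fin m) (j : Fin n) :
    CV G H 0 (true,i,j) = (vfeat G i, wfeat G j, MILP.A G i j) := rfl

lemma CV_zero_false (i : Fin m) (j : Fin n) :
    CV G H 0 (false,i,j) = (vfeat H i, wfeat H j, MILP.A H i j) := rfl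

lemma CW_zero_true (j1 j2 : Fin n) :
    CW G H 0 (true,j1,j2) = (wfeat G j1, wfeat G j2, decide (j1 = j2)) := rfl

lemma CW_zero_false (j1 j2 : Fin n) :
    CW G H 0 (false,j1,j2) = (wfeat H j1, wfeat H j2, decide (j1 = j2)) := rfl

lemma vwA_CV_true (l : ℕ) (i : Fin m) (j : Fin n) :
    vwA l (CV G H l (true,i,j)) = MILP.A G i j := by
  unfold vwA
  rw [vwProj0_CV, CV_zero_true]

lemma vwA_CV_false (l : ℕ) (i : Fin m) (j : Fin n) :
    vwA l (CV G H l (false,i,j)) = MILP.A H i j := by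
  unfold vwA
  rw [vwProj0_CV, CV_zero_false]

lemma sum_filter_eq_of_pairs {α : Type*} [Fintype α] {μ : Type*} [DecidableEq μ]
    {r r' : α → μ} {a a' : α → ℝ}
    (hM : Finset.univ.val.map (fun x => (r x, a x))
        = Finset.univ.val.map (fun x => (r' x, a' x))) (t : μ) :
    ∑ x ∈ Finset.univ.filter (fun x => r x = t), a x
    = ∑ x ∈ Finset.univ.filter (fun x => r' x = t), a' x := by
  classical
  have key : ∀ (r : α → μ) (a : α → ℝ),
      (∑ x ∈ Finset.univ.filter (fun x => r x = t), a x)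
      = (Multiset.map Prod.snd ((Finset.univ.val.map (fun x => (r x, a x))).filter
          (fun e => e.1 = t))).sum := by
    intro r a
    rw [Multiset.filter_map, Multiset.map_map]
    have hpred : Multiset.filter ((fun e : μ × ℝ => e.1 = t) ∘ fun x => (r x, a x))
        Finset.univ.val = Multiset.filter (fun x => r x = t) Finset.univ.val :=
      Multiset.filter_congr fun x _ => Iff.rfl
    rw [hpred]
    have hfun : Multiset.map (Prod.snd ∘ fun x => (r x, a x))
        (Multiset.filter (fun x => r x = t) Finset.univ.val)
        = Multiset.map a (Multiset.filter (fun x => r x = t) Finset.univ.val) :=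
      Multiset.map_congr rfl fun x _ => rfl
    rw [hfun]
    rw [Finset.sum]
    rw [Finset.filter_val]
  rw [key r a, key r' a', hM]

variable {G H}

lemma thyp_of_colors (L : ℕ) (hst : StepStable G H L) (j jH : Fin n)
    (hdiag : CW G H L (true, j, j) = CW G H L (false, jH, jH))
    (hWmul : Finset.univ.val.map (fun j1 => CW G H L (true, j1, j))
           = Finset.univ.val.map (fun j1 => CW G H L (false, j1, jH))) :
    THyp G H (fun i => CV G H L (true, i, j)) (fun i => CV G H L (false, i, jH))
      (fun j1 => CW G H L (true, j1, j)) (fun j1 => CW G H L (false, j1, jH)) := by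
  have hst1 : StepStable G H (L+1) := stepStable_succ G H hst
  have hdiag2 : CW G H (L+2) (true,j,j) = CW G H (L+2) (false,jH,jH) :=
    hst1.2 _ _ (hst.2 _ _ hdiag)
  constructor
  case h1 =>
    have h2 : (Finset.univ.val.map fun i => (CV G H (L+1) (true,i,j), CV G H (L+1) (true,i,j)))
        = (Finset.univ.val.map fun i =>
            (CV G H (L+1) (false,i,jH), CV G H (L+1) (false,i,jH))) :=
      congrArg Prod.snd hdiag2
    have h3 := congrArg (Multiset.map (fun e : VWColor (L+1) × VWColor (L+1) => e.1.1)) h2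
    rw [Multiset.map_map, Multiset.map_map] at h3
    have e1 : Finset.univ.val.map ((fun e : VWColor (L+1) × VWColor (L+1) => e.1.1)
        ∘ fun i => (CV G H (L+1) (true,i,j), CV G H (L+1) (true,i,j)))
        = Finset.univ.val.map (fun i => CV G H L (true,i,j)) :=
      Multiset.map_congr rfl fun i _ => CV_fst G H L (true,i,j)
    have e2 : Finset.univ.val.map ((fun e : VWColor (L+1) × VWColor (L+1) => e.1.1)
        ∘ fun i => (CV G H (L+1) (false,i,jH), CV G H (L+1) (false,i,jH)))
        = Finset.univ.val.map (fun i => CV G H L (false,i,jH)) :=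
      Multiset.map_congr rfl fun i _ => CV_fst G H L (false,i,jH)
    exact (e1.symm.trans h3).trans e2
  case h2 => exact hWmul
  case hb =>
    intro i i' hii
    have h0 := congrArg (vwProj0 L) hii
    rw [vwProj0_CV, vwProj0_CV, CV_zero_true, CV_zero_false] at h0
    exact ⟨congrArg (fun p : VFeat × WFeat × ℝ => p.1.1) h0,
      congrArg (fun p : VFeat × WFeat × ℝ => p.1.2) h0⟩
  case hw =>
    intro j1 j1' h11
    have h0 := congrArg (wwProj0 L) h11
    rw [wwProj0_CW, wwProj0_CW, CW_zero_true, CW_zero_false] at h0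
    exact ⟨congrArg (fun p : WFeat × WFeat × Bool => p.1.1) h0,
      congrArg (fun p : WFeat × WFeat × Bool => p.1.2.1) h0,
      congrArg (fun p : WFeat × WFeat × Bool => p.1.2.2.1) h0,
      congrArg (fun p : WFeat × WFeat × Bool => p.1.2.2.2) h0⟩
  case hs =>
    intro i i' t hii
    have h1 : CV G H (L+1) (true,i,j) = CV G H (L+1) (false,i',jH) := hst.1 _ _ hii
    have h2 : (Finset.univ.val.map fun j1 => (CW G H L (true,j1,j), CV G H L (true,i,j1)))
        = (Finset.univ.val.map fun j1 => (CW G H L (false,j1,jH), CV G H L (false,i',j1))) :=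
      congrArg Prod.snd h1
    have h3 := congrArg (Multiset.map (fun e : WWColor L × VWColor L => (e.1, vwA L e.2))) h2
    rw [Multiset.map_map, Multiset.map_map] at h3
    have e1 : Finset.univ.val.map ((fun e : WWColor L × VWColor L => (e.1, vwA L e.2))
        ∘ fun j1 => (CW G H L (true,j1,j), CV G H L (true,i,j1)))
        = Finset.univ.val.map (fun j1 => (CW G H L (true,j1,j), MILP.A G i j1)) :=
      Multiset.map_congr rfl fun j1 _ => by
        show (CW G H L (true,j1,j), vwA L (CV G H L (true,i,j1))) = _
        rw [vwA_CV_true]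
    have e2 : Finset.univ.val.map ((fun e : WWColor L × VWColor L => (e.1, vwA L e.2))
        ∘ fun j1 => (CW G H L (false,j1,jH), CV G H L (false,i',j1)))
        = Finset.univ.val.map (fun j1 => (CW G H L (false,j1,jH), MILP.A H i' j1)) :=
      Multiset.map_congr rfl fun j1 _ => by
        show (CW G H L (false,j1,jH), vwA L (CV G H L (false,i',j1))) = _
        rw [vwA_CV_false]
    exact sum_filter_eq_of_pairs ((e1.symm.trans h3).trans e2) t
  case hu =>
    intro j1 j1' k h11
    have h1 : CW G H (L+1) (true,j1,j) = CW G H (L+1) (false,j1',jH) := hst.2 _ _ h11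
    have h2 : (Finset.univ.val.map fun i => (CV G H L (true,i,j), CV G H L (true,i,j1)))
        = (Finset.univ.val.map fun i => (CV G H L (false,i,jH), CV G H L (false,i,j1'))) :=
      congrArg Prod.snd h1
    have h3 := congrArg (Multiset.map (fun e : VWColor L × VWColor L => (e.1, vwA L e.2))) h2
    rw [Multiset.map_map, Multiset.map_map] at h3
    have e1 : Finset.univ.val.map ((fun e : VWColor L × VWColor L => (e.1, vwA L e.2))
        ∘ fun i => (CV G H L (true,i,j), CV G H L (true,i,j1)))
        = Finset.univ.val.map (fun i => (CV G H L (true,i,j), MILP.A G i j1)) :=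
      Multiset.map_congr rfl fun i _ => by
        show (CV G H L (true,i,j), vwA L (CV G H L (true,i,j1))) = _
        rw [vwA_CV_true]
    have e2 : Finset.univ.val.map ((fun e : VWColor L × VWColor L => (e.1, vwA L e.2))
        ∘ fun i => (CV G H L (false,i,jH), CV G H L (false,i,j1')))
        = Finset.univ.val.map (fun i => (CV G H L (false,i,jH), MILP.A H i j1')) :=
      Multiset.map_congr rfl fun i _ => by
        show (CV G H L (false,i,jH), vwA L (CV G H L (false,i,j1'))) = _
        rw [vwA_CV_false]
    exact sum_filter_eq_of_pairs ((e1.symm.trans h3).trans e2) k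

end Extract

/-! ### Modified instances -/

section Modified

variable {m n : ℕ}

def modB (G : MILP m n) (j : Fin n) (lo' : ExtLo) (hi' : ExtHi) : MILP m n :=
  (G.1, G.2.1, G.2.2.1, G.2.2.2.1, Function.update G.2.2.2.2.1 j lo',
   Function.update G.2.2.2.2.2.1 j hi', G.2.2.2.2.2.2)

lemma modB_lo (G : MILP m n) (j : Fin n) (lo' : ExtLo) (hi' : ExtHi) :
    MILP.lo (modB G j lo' hi') = Function.update (MILP.lo G) j lo' := rfl

lemma modB_hi (G : MILP m n) (j : Fin n) (lo' : ExtLo) (hi' : ExtHi) :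
    MILP.hi (modB G j lo' hi') = Function.update (MILP.hi G) j hi' := rfl

lemma feasSetMod_eq (G : MILP m n) (j : Fin n) (lo' : ExtLo) (hi' : ExtHi) :
    feasSetMod G j lo' hi' = lpFeasSet (modB G j lo' hi') := by
  ext x
  constructor
  · rintro ⟨hc, hbnd, hlo, hhi⟩
    refine ⟨hc, fun j' => ?_⟩
    by_cases hj : j' = j
    · subst hj
      rw [modB_lo, modB_hi]
      rw [show Function.update (MILP.lo G) j' lo' j' = lo' from Function.update_self _ _ _,
        show Function.update (MILP.hi G) j' hi' j' = hi' from Function.update_self _ _ _]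
      exact ⟨hlo, hhi⟩
    · rw [modB_lo, modB_hi]
      rw [show Function.update (MILP.lo G) j lo' j' = MILP.lo G j'
          from Function.update_of_ne hj _ _,
        show Function.update (MILP.hi G) j hi' j' = MILP.hi G j'
          from Function.update_of_ne hj _ _]
      exact hbnd j' hj
  · rintro ⟨hc, hbnd⟩
    refine ⟨hc, fun j' hj => ?_, ?_, ?_⟩
    · have := hbnd j'
      rw [modB_lo, modB_hi,
        show Function.update (MILP.lo G) j lo' j' = MILP.lo G j'
          from Function.update_of_ne hj _ _,
        show Function.update (MILP.hi G) j hi' j' = MILP.hi G j'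
          from Function.update_of_ne hj _ _] at this
      exact this
    · have := (hbnd j).1
      rw [modB_lo, show Function.update (MILP.lo G) j lo' j = lo'
        from Function.update_self _ _ _] at this
      exact this
    · have := (hbnd j).2
      rw [modB_hi, show Function.update (MILP.hi G) j hi' j = hi'
        from Function.update_self _ _ _] at this
      exact this

lemma lpValMod_eq_fstar (G : MILP m n) (j : Fin n) (lo' : ExtLo) (hi' : ExtHi) :
    lpValMod G j lo' hi' = fstar (modB G j lo' hi') := by
  unfold lpValMod fstar
  rw [feasSetMod_eq]
  rfl

namespace THyp

variable {κ μ : Type*} [DecidableEq κ] [DecidableEq μ]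
variable {G H : MILP m n} {rV rV' : Fin m → κ} {rW rW' : Fin n → μ}

lemma mod (hy : THyp G H rV rV' rW rW') {j jH : Fin n}
    (hroot : ∀ j1 j1', rW j1 = rW' j1' → (j1 = j ↔ j1' = jH))
    (lo1 : ExtLo) (hi1 : ExtHi) :
    THyp (modB G j lo1 hi1) (modB H jH lo1 hi1) rV rV' rW rW' where
  h1 := hy.h1
  h2 := hy.h2
  hb := hy.hb
  hw := fun j1 j1' h11 => by
    obtain ⟨hc, hlo, hhi, hint⟩ := hy.hw j1 j1' h11
    rw [modB_lo, modB_hi, modB_lo, modB_hi]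
    by_cases hj1 : j1 = j
    · have hj1' : j1' = jH := (hroot j1 j1' h11).1 hj1
      subst hj1; subst hj1'
      refine ⟨hc, ?_, ?_, hint⟩
      · rw [Function.update_self, Function.update_self]
      · rw [Function.update_self, Function.update_self]
    · have hj1' : j1' ≠ jH := fun hh => hj1 ((hroot j1 j1' h11).2 hh)
      refine ⟨hc, ?_, ?_, hint⟩
      · rw [Function.update_of_ne hj1, Function.update_of_ne hj1']
        exact hlo
      · rw [Function.update_of_ne hj1, Function.update_of_ne hj1']
        exact hhi
  hs := hy.hs
  hu := hy.hu

end THyp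
end Modified
end SBaux
namespace SBaux
open Finset

section Diag

variable {m n : ℕ} (G H : MILP m n)

lemma filter_pairs_diag : ((Finset.univ : Finset (Fin n × Fin n)).val.filter
    (fun q => q.1 = q.2)) = Finset.univ.val.map (fun j => (j, j)) := by
  classical
  refine (Multiset.Nodup.ext ?_ ?_).2 ?_
  · exact Multiset.Nodup.filter _ Finset.univ.nodup
  · exact Multiset.Nodup.map (fun a b hab => (Prod.ext_iff.1 hab).1) Finset.univ.nodup
  · rintro ⟨a, b⟩
    simp only [Multiset.mem_filter, Multiset.mem_map]
    constructor
    · rintro ⟨-, heq⟩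
      refine ⟨a, Finset.mem_def.1 (Finset.mem_univ _), ?_⟩
      have hab : a = b := heq
      rw [hab]
    · rintro ⟨j, -, hj⟩
      obtain ⟨h1, h2⟩ := Prod.ext_iff.1 hj
      refine ⟨Finset.mem_def.1 (Finset.mem_univ _), ?_⟩
      show a = b
      have e1 : j = a := h1
      have e2 : j = b := h2
      rw [← e1, ← e2]

lemma diag_multiset_eq (h : FWLEquiv G H) (l : ℕ) :
    Finset.univ.val.map (fun j => CW G H l (true,j,j))
    = Finset.univ.val.map (fun j => CW G H l (false,j,j)) := by
  classical
  have hWW := (h l).2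
  set p : WWColor l → Prop := fun c => (wwProj0 l c).2.2 = true with hp
  have hflagT : ∀ q : Fin n × Fin n, p (CW G H l (true, q.1, q.2)) ↔ q.1 = q.2 := by
    intro q
    simp only [hp]
    rw [wwProj0_CW, CW_zero_true]
    exact decide_eq_true_iff
  have hflagF : ∀ q : Fin n × Fin n, p (CW G H l (false, q.1, q.2)) ↔ q.1 = q.2 := by
    intro q
    simp only [hp]
    rw [wwProj0_CW, CW_zero_false]
    exact decide_eq_true_iff
  have key : ∀ (F : Fin n × Fin n → WWColor l),
      (∀ q : Fin n × Fin n, p (F q) ↔ q.1 = q.2) →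
      Multiset.filter p ((Finset.univ : Finset (Fin n × Fin n)).val.map F)
      = Finset.univ.val.map (fun j => F (j,j)) := by
    intro F hF
    rw [Multiset.filter_map]
    have h1 : Multiset.filter (p ∘ F) (Finset.univ : Finset (Fin n × Fin n)).val
        = Multiset.filter (fun q : Fin n × Fin n => q.1 = q.2) Finset.univ.val :=
      Multiset.filter_congr fun q _ => hF q
    rw [h1, filter_pairs_diag, Multiset.map_map]
    rfl
  have e1 := key (fun q => CW G H l (true,q.1,q.2)) hflagT
  have e2 := key (fun q => CW G H l (false,q.1,q.2)) hflagF
  have e0 := congrArg (Multiset.filter p) hWW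
  exact (e1.symm.trans e0).trans e2

lemma wfeat_multiset_eq (h : FWLEquiv G H) :
    Finset.univ.val.map (wfeat G) = Finset.univ.val.map (wfeat H) := by
  have hd := diag_multiset_eq G H h 0
  have e := congrArg (Multiset.map (fun c : WWColor 0 => c.1)) hd
  rw [Multiset.map_map, Multiset.map_map] at e
  exact e

lemma rooted_base {W : Type*} (w w' : Fin n → W) (j j' : Fin n)
    (hmul : Finset.univ.val.map w = Finset.univ.val.map w') (hj : w j = w' j') :
    Finset.univ.val.map (fun j1 => (w j1, w j, decide (j1 = j)))
    = Finset.univ.val.map (fun j1 => (w' j1, w' j', decide (j1 = j'))) := by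
  classical
  have hsplit : ∀ (w : Fin n → W) (j : Fin n),
      Finset.univ.val.map (fun j1 => (w j1, w j, decide (j1 = j)))
      = (w j, w j, true) ::ₘ (Finset.univ.val.erase j).map (fun a => (w a, w j, false)) := by
    intro w j
    have hcons : (Finset.univ.val : Multiset (Fin n)) = j ::ₘ Finset.univ.val.erase j :=
      (Multiset.cons_erase (Finset.mem_def.1 (Finset.mem_univ j))).symm
    conv_lhs => rw [hcons]
    rw [Multiset.map_cons]
    have hd : decide (j = j) = true := by simp
    rw [hd]
    congr 1
    refine Multiset.map_congr rfl fun a ha => ?_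
    have hne : a ≠ j := by
      have hmem := (Multiset.Nodup.mem_erase_iff Finset.univ.nodup).1 ha
      exact hmem.1
    rw [decide_eq_false hne]
  have herase : (Finset.univ.val.erase j).map w = (Finset.univ.val.erase j').map w' := by
    have hc1 : (Finset.univ.val : Multiset (Fin n)) = j ::ₘ Finset.univ.val.erase j :=
      (Multiset.cons_erase (Finset.mem_def.1 (Finset.mem_univ j))).symm
    have hc2 : (Finset.univ.val : Multiset (Fin n)) = j' ::ₘ Finset.univ.val.erase j' :=
      (Multiset.cons_erase (Finset.mem_def.1 (Finset.mem_univ j'))).symm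
    have e1 : w j ::ₘ (Finset.univ.val.erase j).map w
        = w' j' ::ₘ (Finset.univ.val.erase j').map w' := by
      rw [← Multiset.map_cons, ← Multiset.map_cons, ← hc1, ← hc2]
      exact hmul
    rw [hj] at e1
    exact (Multiset.cons_inj_right _).1 e1
  rw [hsplit w j, hsplit w' j', hj]
  congr 1
  have t1 : (Finset.univ.val.erase j).map (fun a => (w a, w' j', false))
      = Multiset.map (fun b => (b, w' j', false)) ((Finset.univ.val.erase j).map w) :=
    (Multiset.map_map (fun b => (b, w' j', false)) w _).symm
  have t2 : (Finset.univ.val.erase j').map (fun a => (w' a, w' j', false))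
      = Multiset.map (fun b => (b, w' j', false)) ((Finset.univ.val.erase j').map w') :=
    (Multiset.map_map (fun b => (b, w' j', false)) w' _).symm
  rw [t1, t2, herase]

lemma hWmul_of (h : FWLEquiv G H) (L : ℕ) (hst : StepStable G H L) {j jH : Fin n}
    (hdiag : CW G H L (true,j,j) = CW G H L (false,jH,jH)) :
    Finset.univ.val.map (fun j1 => CW G H L (true,j1,j))
    = Finset.univ.val.map (fun j1 => CW G H L (false,j1,jH)) := by
  classical
  rcases Nat.eq_zero_or_pos m with hm | hm
  · have hpad := CW_pad G H hm
    have hj0 : wfeat G j = wfeat H jH := by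
      have h0 := congrArg (wwProj0 L) hdiag
      rw [wwProj0_CW, wwProj0_CW, CW_zero_true, CW_zero_false] at h0
      exact congrArg (fun p : WFeat × WFeat × Bool => p.1) h0
    have hbase : Finset.univ.val.map (fun j1 => CW G H 0 (true,j1,j))
        = Finset.univ.val.map (fun j1 => CW G H 0 (false,j1,jH)) :=
      rooted_base (wfeat G) (wfeat H) j jH (wfeat_multiset_eq G H h) hj0
    calc Finset.univ.val.map (fun j1 => CW G H L (true,j1,j))
        = Finset.univ.val.map (fun j1 => wwPad L (CW G H 0 (true,j1,j))) :=
          Multiset.map_congr rfl fun j1 _ => hpad L _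
    _ = Multiset.map (wwPad L) (Finset.univ.val.map (fun j1 => CW G H 0 (true,j1,j))) :=
          (Multiset.map_map (wwPad L) (fun j1 => CW G H 0 (true,j1,j)) _).symm
    _ = Multiset.map (wwPad L) (Finset.univ.val.map (fun j1 => CW G H 0 (false,j1,jH))) := by
          rw [hbase]
    _ = Finset.univ.val.map (fun j1 => wwPad L (CW G H 0 (false,j1,jH))) :=
          Multiset.map_map (wwPad L) (fun j1 => CW G H 0 (false,j1,jH)) _
    _ = Finset.univ.val.map (fun j1 => CW G H L (false,j1,jH)) :=
          Multiset.map_congr rfl fun j1 _ => (hpad L _).symm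
  · have hst1 := stepStable_succ G H hst
    have hdiag2 : CW G H (L+2) (true,j,j) = CW G H (L+2) (false,jH,jH) :=
      hst1.2 _ _ (hst.2 _ _ hdiag)
    have h2 : (Finset.univ.val.map fun i => (CV G H (L+1) (true,i,j), CV G H (L+1) (true,i,j)))
        = (Finset.univ.val.map fun i =>
            (CV G H (L+1) (false,i,jH), CV G H (L+1) (false,i,jH))) :=
      congrArg Prod.snd hdiag2
    have h3 := congrArg (Multiset.map (fun e : VWColor (L+1) × VWColor (L+1) => e.1)) h2
    rw [Multiset.map_map, Multiset.map_map] at h3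
    have hmem : CV G H (L+1) (true,⟨0, hm⟩,j) ∈ Finset.univ.val.map
        ((fun e : VWColor (L+1) × VWColor (L+1) => e.1)
          ∘ fun i => (CV G H (L+1) (false,i,jH), CV G H (L+1) (false,i,jH))) := by
      rw [← h3]
      exact Multiset.mem_map_of_mem _ (Finset.mem_def.1 (Finset.mem_univ (⟨0, hm⟩ : Fin m)))
    obtain ⟨i0', -, hi0'⟩ := Multiset.mem_map.1 hmem
    have hcv : CV G H (L+1) (false,i0',jH) = CV G H (L+1) (true,⟨0, hm⟩,j) := hi0'
    have h4 : (Finset.univ.val.map fun j1 => (CW G H L (false,j1,jH), CV G H L (false,i0',j1)))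
        = (Finset.univ.val.map fun j1 =>
            (CW G H L (true,j1,j), CV G H L (true,(⟨0, hm⟩ : Fin m),j1))) :=
      congrArg Prod.snd hcv
    have h5 := congrArg (Multiset.map (fun e : WWColor L × VWColor L => e.1)) h4
    rw [Multiset.map_map, Multiset.map_map] at h5
    exact h5.symm

end Diag
end SBaux
/-- Two MILP instances with real-valued SB scores that satisfy
`G ∼₂ Ḡ` have equal SB scores up to a permutation of the variables. -/
theorem SB_eq_up_to_perm_of_fwlEquiv
    {m n : ℕ} (G H : MILP m n)
    (hSBG : SBRealValued G) (hSBH : SBRealValued H)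
    (h : FWLEquiv G H) :
    ∃ σ : Equiv.Perm (Fin n), ∀ j, SB G j = SB H (σ.symm j) := by
  classical
  obtain ⟨L, hst⟩ := SBaux.exists_stepStable G H
  obtain ⟨σ, hσ⟩ := SBaux.exists_perm_of_map_eq
    (fun j => SBaux.CW G H L (true,j,j)) (fun j => SBaux.CW G H L (false,j,j))
    (SBaux.diag_multiset_eq G H h L)
  have main : ∀ j, SB G j = SB H (σ j) := by
    intro j
    have hdiag : SBaux.CW G H L (true,j,j) = SBaux.CW G H L (false, σ j, σ j) := hσ j
    have hWmul := SBaux.hWmul_of G H h L hst hdiag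
    have hy := SBaux.thyp_of_colors L hst j (σ j) hdiag hWmul
    have hfeat := hy.hw j (σ j) hdiag
    have hfstar : fstar G = fstar H := hy.fstar_eq
    have hxstar : xstar G j = xstar H (σ j) := hy.xstar_transfer hSBG.1 hSBH.1 hdiag
    have hroot : ∀ j1 j1', (SBaux.CW G H L (true,j1,j)) = (SBaux.CW G H L (false,j1',σ j))
        → (j1 = j ↔ j1' = σ j) := by
      intro j1 j1' h11
      have h0 := congrArg (SBaux.wwProj0 L) h11
      rw [SBaux.wwProj0_CW, SBaux.wwProj0_CW, SBaux.CW_zero_true, SBaux.CW_zero_false] at h0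
      have hd := congrArg (fun p : WFeat × WFeat × Bool => p.2.2) h0
      exact decide_eq_decide.1 hd
    have hDown : branchDown G j = branchDown H (σ j) := by
      have hyd := hy.mod hroot (MILP.lo G j) (Sum.inl ((⌊xstar G j⌋ : ℤ) : ℝ))
      unfold branchDown
      rw [SBaux.lpValMod_eq_fstar, SBaux.lpValMod_eq_fstar]
      rw [← hfeat.2.1, ← hxstar]
      exact hyd.fstar_eq
    have hUp : branchUp G j = branchUp H (σ j) := by
      have hyu := hy.mod hroot (Sum.inl ((⌈xstar G j⌉ : ℤ) : ℝ)) (MILP.hi G j)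
      unfold branchUp
      rw [SBaux.lpValMod_eq_fstar, SBaux.lpValMod_eq_fstar]
      rw [← hfeat.2.2.1, ← hxstar]
      exact hyu.fstar_eq
    unfold SB
    rw [hfeat.2.2.2, hDown, hUp, hfstar]
  exact ⟨σ.symm, fun j => by rw [Equiv.symm_symm]; exact main j⟩
end
end
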